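/- arXiv:2506.08506 — 5 statements merged into one kernel-verified Lean document; each statement's English description precedes it below -/
import Mathlib

section
/- Assume the surrogate assumption for problem (P) and let (x^k)_{k≥0} be generated by Algorithm CMMA: x⁰ ∈ 𝒳 satisfies c_i(x⁰) < 0 for all i, and for each k, x^{k+1} attains the minimum of z ↦ f̃(z|x^k) + (L/(κ+1))‖z − x^k‖^{κ+1} + r(z) over {z ∈ 𝒳 : c̃_i(z|x^k) ≤ 0, i = 1,…,m}. Then every x^k is feasible for (P), F(x^{k+1}) ≤ F(x^k) − (L/(κ+1))‖x^{k+1} − x^k‖^{κ+1} for all k, and if F* ∈ ℝ is a lower bound for F on the feasible set of (P), then for every K ≥ 1, min_{0≤k≤K−1} ‖x^{k+1} − x^k‖ ≤ ((κ+1)(F(x⁰) − F*)/(L·K))^{1/(κ+1)}. -/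
open scoped RealInnerProductSpace
open Real Set

/-- Under the surrogate assumption for problem (P), the iterates of
Algorithm CMMA stay feasible, decrease `F = f + r` by at least
`(L/(κ+1))‖x^{k+1} − x^k‖^{κ+1}` per step, and consequently for every lower bound `F*`
of `F` on the feasible set and every `K ≥ 1`,
`min_{0≤k≤K−1} ‖x^{k+1} − x^k‖ ≤ ((κ+1)(F(x⁰) − F*)/(L K))^{1/(κ+1)}`. -/
theorem cmma_descent_and_residual {n m : ℕ}
    (X : Set (EuclideanSpace ℝ (Fin n))) (hXconv : Convex ℝ X) (hXclosed : IsClosed X)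
    (f r : EuclideanSpace ℝ (Fin n) → ℝ)
    (c : Fin m → EuclideanSpace ℝ (Fin n) → ℝ)
    (f' : EuclideanSpace ℝ (Fin n) → EuclideanSpace ℝ (Fin n))
    (c' : Fin m → EuclideanSpace ℝ (Fin n) → EuclideanSpace ℝ (Fin n))
    (hf : ∀ x, HasGradientAt f (f' x) x) (hf'cont : Continuous f')
    (hc : ∀ i x, HasGradientAt (c i) (c' i x) x) (hc'cont : ∀ i, Continuous (c' i))
    (hrconv : ConvexOn ℝ univ r)
    (κ : ℝ) (κi : Fin m → ℝ) (L : ℝ) (Li Ni : Fin m → ℝ)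
    (hκ0 : 0 < κ) (hκ1 : κ ≤ 1) (hκi0 : ∀ i, 0 < κi i) (hκi1 : ∀ i, κi i ≤ 1)
    (hL : 0 < L) (hLi : ∀ i, 0 < Li i) (hNi : ∀ i, 0 < Ni i)
    -- the surrogates: `ft y x` stands for `f̃(x∣y)`, `ct i y x` for `c̃ᵢ(x∣y)`;
    -- `ft' y x` and `ct' i y x` are their gradients in `x`
    (ft : EuclideanSpace ℝ (Fin n) → EuclideanSpace ℝ (Fin n) → ℝ)
    (ct : Fin m → EuclideanSpace ℝ (Fin n) → EuclideanSpace ℝ (Fin n) → ℝ)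
    (ft' : EuclideanSpace ℝ (Fin n) → EuclideanSpace ℝ (Fin n) → EuclideanSpace ℝ (Fin n))
    (ct' : Fin m → EuclideanSpace ℝ (Fin n) → EuclideanSpace ℝ (Fin n) →
      EuclideanSpace ℝ (Fin n))
    -- the surrogate assumption, for every feasible base point `y`
    (hftconv : ∀ y, y ∈ X → (∀ i, c i y ≤ 0) → ConvexOn ℝ univ (ft y))
    (hftgrad : ∀ y, y ∈ X → (∀ i, c i y ≤ 0) → ∀ x, HasGradientAt (ft y) (ft' y x) x)
    (hftmaj : ∀ y, y ∈ X → (∀ i, c i y ≤ 0) → ∀ x, f x ≤ ft y x)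
    (hfteq : ∀ y, y ∈ X → (∀ i, c i y ≤ 0) → ft y y = f y)
    (hftholder : ∀ y, y ∈ X → (∀ i, c i y ≤ 0) →
      ∀ x, ‖ft' y x - f' x‖ ≤ 2 * L * ‖x - y‖ ^ κ)
    (hctconv : ∀ i y, y ∈ X → (∀ j, c j y ≤ 0) → ConvexOn ℝ univ (ct i y))
    (hctgrad : ∀ i y, y ∈ X → (∀ j, c j y ≤ 0) → ∀ x, HasGradientAt (ct i y) (ct' i y x) x)
    (hctmaj : ∀ i y, y ∈ X → (∀ j, c j y ≤ 0) → ∀ x, c i x ≤ ct i y x)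
    (hcteq : ∀ i y, y ∈ X → (∀ j, c j y ≤ 0) → ct i y y = c i y)
    (hctholder : ∀ i y, y ∈ X → (∀ j, c j y ≤ 0) →
      ∀ x, ‖ct' i y x - c' i x‖ ≤ 2 * Li i * ‖x - y‖ ^ (κi i))
    (hctbnd : ∀ i x y, x ∈ X → (∀ j, c j x ≤ 0) → y ∈ X → (∀ j, c j y ≤ 0) →
      ‖ct' i y x‖ ≤ Ni i)
    -- Algorithm CMMA: `x 0` strictly feasible; `x (k+1)` minimizes the surrogate subproblem
    (x : ℕ → EuclideanSpace ℝ (Fin n))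
    (hx0X : x 0 ∈ X) (hx0 : ∀ i, c i (x 0) < 0)
    (hstep : ∀ k, x (k + 1) ∈ X ∧ (∀ i, ct i (x k) (x (k + 1)) ≤ 0) ∧
      ∀ z ∈ X, (∀ i, ct i (x k) z ≤ 0) →
        ft (x k) (x (k + 1)) + (L / (κ + 1)) * ‖x (k + 1) - x k‖ ^ (κ + 1) + r (x (k + 1)) ≤
          ft (x k) z + (L / (κ + 1)) * ‖z - x k‖ ^ (κ + 1) + r z) :
    (∀ k, x k ∈ X ∧ ∀ i, c i (x k) ≤ 0) ∧
    (∀ k, f (x (k + 1)) + r (x (k + 1)) ≤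
      f (x k) + r (x k) - (L / (κ + 1)) * ‖x (k + 1) - x k‖ ^ (κ + 1)) ∧
    (∀ Fstar : ℝ, (∀ z ∈ X, (∀ i, c i z ≤ 0) → Fstar ≤ f z + r z) →
      ∀ K : ℕ, 1 ≤ K → ∃ k < K,
        ‖x (k + 1) - x k‖ ≤
          ((κ + 1) * (f (x 0) + r (x 0) - Fstar) / (L * K)) ^ (1 / (κ + 1))) := by
  have hκ1pos : (0:ℝ) < κ + 1 := by linarith
  -- feasibility
  have feas : ∀ k, x k ∈ X ∧ ∀ i, c i (x k) ≤ 0 := by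
    intro k
    induction k with
    | zero => exact ⟨hx0X, fun i => (hx0 i).le⟩
    | succ k ih =>
      obtain ⟨hX1, hct1, _⟩ := hstep k
      exact ⟨hX1, fun i => le_trans (hctmaj i (x k) ih.1 ih.2 (x (k+1))) (hct1 i)⟩
  -- descent
  have desc : ∀ k, f (x (k + 1)) + r (x (k + 1)) ≤
      f (x k) + r (x k) - (L / (κ + 1)) * ‖x (k + 1) - x k‖ ^ (κ + 1) := by
    intro k
    obtain ⟨hkX, hkc⟩ := feas k
    obtain ⟨_, _, hmin⟩ := hstep k
    have hzfeas : ∀ i, ct i (x k) (x k) ≤ 0 := fun i => by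
      rw [hcteq i (x k) hkX hkc]; exact hkc i
    have h1 := hmin (x k) hkX hzfeas
    have h0 : ‖x k - x k‖ ^ (κ + 1) = 0 := by
      rw [sub_self, norm_zero, Real.zero_rpow (by linarith)]
    rw [h0, mul_zero, hfteq (x k) hkX hkc] at h1
    have h2 := hftmaj (x k) hkX hkc (x (k + 1))
    linarith
  refine ⟨feas, desc, ?_⟩
  intro Fstar hFstar K hK
  -- telescoping sum
  have sum_le : ∀ K : ℕ,
      (∑ k ∈ Finset.range K, (L / (κ + 1)) * ‖x (k + 1) - x k‖ ^ (κ + 1)) ≤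
        f (x 0) + r (x 0) - (f (x K) + r (x K)) := by
    intro K
    induction K with
    | zero => simp
    | succ K ih =>
      rw [Finset.sum_range_succ]
      have := desc K
      linarith
  have hlb : Fstar ≤ f (x K) + r (x K) := hFstar (x K) (feas K).1 (feas K).2
  have hsum : (∑ k ∈ Finset.range K, (L / (κ + 1)) * ‖x (k + 1) - x k‖ ^ (κ + 1)) ≤
      f (x 0) + r (x 0) - Fstar := le_trans (sum_le K) (by linarith)
  -- argmin
  obtain ⟨k0, hk0mem, hk0min⟩ := Finset.exists_min_image (Finset.range K)
    (fun k => ‖x (k + 1) - x k‖) (Finset.nonempty_range_iff.mpr (by omega))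
  refine ⟨k0, Finset.mem_range.mp hk0mem, ?_⟩
  set A := ‖x (k0 + 1) - x k0‖ ^ (κ + 1) with hA
  have hKpos : (0:ℝ) < K := by exact_mod_cast Nat.pos_of_ne_zero (by omega)
  have hconst : (K : ℝ) * ((L / (κ + 1)) * A) ≤
      ∑ k ∈ Finset.range K, (L / (κ + 1)) * ‖x (k + 1) - x k‖ ^ (κ + 1) := by
    calc (K : ℝ) * ((L / (κ + 1)) * A)
        = ∑ _k ∈ Finset.range K, (L / (κ + 1)) * A := by
          rw [Finset.sum_const, Finset.card_range, nsmul_eq_mul]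
      _ ≤ _ := by
          refine Finset.sum_le_sum fun k hk => ?_
          exact mul_le_mul_of_nonneg_left
            (Real.rpow_le_rpow (norm_nonneg _) (hk0min k hk) (by positivity))
            (by positivity)
  have hAle : A ≤ (κ + 1) * (f (x 0) + r (x 0) - Fstar) / (L * K) := by
    rw [le_div_iff₀ (by positivity)]
    have h1 : (K : ℝ) * ((L / (κ + 1)) * A) ≤ f (x 0) + r (x 0) - Fstar :=
      le_trans hconst hsum
    have h2 : (K : ℝ) * ((L / (κ + 1)) * A) * (κ + 1) ≤
        (f (x 0) + r (x 0) - Fstar) * (κ + 1) :=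
      mul_le_mul_of_nonneg_right h1 (by linarith)
    have h3 : (K : ℝ) * ((L / (κ + 1)) * A) * (κ + 1) = A * (L * K) := by
      field_simp
    linarith [h3 ▸ h2]
  have hback : ‖x (k0 + 1) - x k0‖ = A ^ (1 / (κ + 1)) := by
    rw [hA, one_div, Real.rpow_rpow_inv (norm_nonneg _) (by linarith)]
  rw [hback]
  exact Real.rpow_le_rpow (by positivity) hAle (by positivity)
end

section
/- Consider problem (P) under the surrogate assumption. Let x⁰ ∈ 𝒳 satisfy c_i(x⁰) < 0 for all i, let F* be the optimal value of (P), set Δ = F(x⁰) − F* ≥ 0, and let (x^k) be generated by Algorithm CMMA (x^{k+1} minimizes z ↦ f̃(z|x^k) + (L/(κ+1))‖z − x^k‖^{κ+1} + r(z) over {z ∈ 𝒳 : c̃_i(z|x^k) ≤ 0 ∀i}). Assume there exist B, ρ > 0 such that for every k with ‖x^{k+1} − x^k‖ ≤ ρ there exist λ ∈ ℝ^m_{≥0} with ‖λ‖_∞ ≤ B and l ∈ ∂r(x^{k+1}) satisfying ∇f̃(x^{k+1}|x^k) + l + L‖d^k‖^{κ−1}d^k + Σ_{i=1}^m λ_i∇c̃_i(x^{k+1}|x^k)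 ∈ −N_𝒳(x^{k+1}) and λ_i·c̃_i(x^{k+1}|x^k) = 0 for all i, where d^k = x^{k+1} − x^k. Then for every integer K ≥ (κ+1)Δ/(L·ρ^{κ+1}) there exist an index 0 ≤ k* ≤ K−1 and such a multiplier λ ∈ ℝ^m_{≥0}, ‖λ‖_∞ ≤ B, for which: (a) dist(0, ∇f(x^{k*+1}) + ∂r(x^{k*+1}) + Σ_{i=1}^m λ_i∇c_i(x^{k*+1}) + N_𝒳(x^{k*+1})) ≤ 3L·((κ+1)Δ/(LK))^{κ/(κ+1)} + 2B·Σ_{i=1}^m L_i·((κ+1)Δ/(LK))^{κ_i/(κ+1)}; and (b) for every i with λ_i > 0, 0 ≤ −c_i(x^{k*}) ≤ N_i·((κ+1)Δ/(LK))^{1/(κ+1)}. -/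
open scoped RealInnerProductSpace
open Real Set

/-- The normal cone of a set `X` at a point `u`. -/
def normalCone {n : ℕ} (X : Set (EuclideanSpace ℝ (Fin n)))
    (u : EuclideanSpace ℝ (Fin n)) : Set (EuclideanSpace ℝ (Fin n)) :=
  {v | ∀ z ∈ X, ⟪v, z - u⟫ ≤ 0}

/-- The convex subdifferential of `r` at `u`. -/
def subgrad {n : ℕ} (r : EuclideanSpace ℝ (Fin n) → ℝ)
    (u : EuclideanSpace ℝ (Fin n)) : Set (EuclideanSpace ℝ (Fin n)) :=
  {l | ∀ z, r u + ⟪l, z - u⟫ ≤ r z}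

/-!
Each CMMA step decreases `F = f + r` by at least `L/(κ+1) ‖dᵏ‖^(κ+1)`: the previous iterate
`xᵏ` is feasible for the subproblem and the surrogates are tight there. Telescoping down to `F*`
yields a step `k < K` with `‖dᵏ‖^(κ+1) ≤ (κ+1)Δ/(LK) ≤ ρ^(κ+1)`, where dual boundedness supplies
multipliers. Replacing the surrogate gradients by the true ones in that KKT relation costs only
the Hölder errors, which gives (a). For an active constraint, the gradient inequality of the
convex surrogate `c̃ᵢ(·|xᵏ)` at `xᵏ⁺¹` bounds `-cᵢ(xᵏ) = -c̃ᵢ(xᵏ|xᵏ)` by `Nᵢ ‖dᵏ‖`, which gives (b).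
-/

theorem ConvexOn.add_inner_le_of_hasGradientAt {E : Type*} [NormedAddCommGroup E]
    [InnerProductSpace ℝ E] [CompleteSpace E] {g : E → ℝ} (hg : ConvexOn ℝ univ g) {u g' : E}
    (hgrad : HasGradientAt g g' u) (z : E) : g u + ⟪g', z - u⟫ ≤ g z := by
  have hconv : ConvexOn ℝ univ (g ∘ (AffineMap.lineMap u z : ℝ →ᵃ[ℝ] E)) := by
    simpa using hg.comp_affineMap (AffineMap.lineMap u z : ℝ →ᵃ[ℝ] E)
  have hderiv : HasDerivAt (g ∘ (AffineMap.lineMap u z : ℝ →ᵃ[ℝ] E)) ⟪g', z - u⟫ 0 := by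
    have hfderiv : HasFDerivAt g (InnerProductSpace.toDual ℝ E g')
        (AffineMap.lineMap u z (0 : ℝ)) := by
      simpa using hgrad.hasFDerivAt
    simpa using hfderiv.comp_hasDerivAt (0 : ℝ) AffineMap.hasDerivAt_lineMap
  have hslope := hconv.le_slope_of_hasDerivAt (mem_univ 0) (mem_univ 1) zero_lt_one hderiv
  simp only [slope_def_field, Function.comp_apply, AffineMap.lineMap_apply_zero,
    AffineMap.lineMap_apply_one, sub_zero, div_one] at hslope
  linarith

theorem ConvexOn.neg_le_mul_norm_sub_of_hasGradientAt {E : Type*} [NormedAddCommGroup E]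
    [InnerProductSpace ℝ E] [CompleteSpace E] {g : E → ℝ} (hg : ConvexOn ℝ univ g) {u g' : E}
    {N : ℝ} (hgrad : HasGradientAt g g' u) (hu : g u = 0) (hN : ‖g'‖ ≤ N) (z : E) :
    -g z ≤ N * ‖u - z‖ := by
  have hsupport := hg.add_inner_le_of_hasGradientAt hgrad z
  calc -g z ≤ -⟪g', z - u⟫ := by linarith
    _ ≤ ‖g'‖ * ‖z - u‖ := (neg_le_abs _).trans (abs_real_inner_le_norm _ _)
    _ ≤ N * ‖u - z‖ := by rw [norm_sub_rev]; gcongr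

theorem exists_lt_le_div_of_add_mul_le {Φ a : ℕ → ℝ} {Φmin C : ℝ} (hC : 0 < C)
    (hdesc : ∀ k, Φ (k + 1) + C * a k ≤ Φ k) (hlb : ∀ k, Φmin ≤ Φ k) {K : ℕ} (hK : 0 < K) :
    ∃ k < K, a k ≤ (Φ 0 - Φmin) / (C * K) := by
  have hsum : ∑ k ∈ Finset.range K, a k ≤ ∑ _k ∈ Finset.range K, (Φ 0 - Φmin) / (C * K) := by
    calc ∑ k ∈ Finset.range K, a k ≤ ∑ k ∈ Finset.range K, (Φ k - Φ (k + 1)) / C := by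
          gcongr with k; rw [le_div_iff₀' hC]; linarith [hdesc k]
      _ = (Φ 0 - Φ K) / C := by rw [← Finset.sum_div, Finset.sum_range_sub']
      _ ≤ (Φ 0 - Φmin) / C := by gcongr; exact hlb K
      _ = ∑ _k ∈ Finset.range K, (Φ 0 - Φmin) / (C * K) := by
          rw [Finset.sum_const, Finset.card_range, nsmul_eq_mul]; field_simp
  obtain ⟨k, hk, hak⟩ := Finset.exists_le_of_sum_le (Finset.nonempty_range_iff.mpr hK.ne') hsum
  exact ⟨k, Finset.mem_range.mp hk, hak⟩

theorem rpow_le_rpow_div_of_rpow_le {t q A : ℝ} (ht : 0 ≤ t) (hq : 0 < q) (htA : t ^ q ≤ A)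
    {p : ℝ} (hp : 0 ≤ p) : t ^ p ≤ A ^ (p / q) :=
  calc t ^ p = (t ^ q) ^ (p / q) := by rw [← rpow_mul ht, mul_div_cancel₀ _ hq.ne']
    _ ≤ A ^ (p / q) := rpow_le_rpow (rpow_nonneg ht q) htA (div_nonneg hp hq.le)

/-- At `d = 0` both sides vanish, as `0 ^ p = 0` for `p ≠ 0`: this is the convention
`‖d‖^(κ-1) d = 0`. -/
theorem norm_mul_rpow_sub_one_smul {E : Type*} [NormedAddCommGroup E] [NormedSpace ℝ E]
    {L p : ℝ} (hL : 0 ≤ L) (hp : p ≠ 0) (d : E) :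
    ‖(L * ‖d‖ ^ (p - 1)) • d‖ = L * ‖d‖ ^ p := by
  have hpow : ‖d‖ ^ (p - 1 + 1) = ‖d‖ ^ (p - 1) * ‖d‖ :=
    rpow_add_one' (norm_nonneg d) (by rwa [sub_add_cancel])
  rw [sub_add_cancel] at hpow
  rw [norm_smul, norm_of_nonneg (by positivity), hpow, mul_assoc]

theorem cmma_iterates_feasible {E ι : Type*} {X : Set E} {c : ι → E → ℝ}
    {ct : ι → E → E → ℝ} {x : ℕ → E} (hx0X : x 0 ∈ X) (hx0 : ∀ i, c i (x 0) ≤ 0)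
    (hctmaj : ∀ i y, y ∈ X → (∀ j, c j y ≤ 0) → ∀ z, c i z ≤ ct i y z)
    (hstep : ∀ k, x (k + 1) ∈ X ∧ ∀ i, ct i (x k) (x (k + 1)) ≤ 0) (k : ℕ) :
    x k ∈ X ∧ ∀ i, c i (x k) ≤ 0 := by
  induction k with
  | zero => exact ⟨hx0X, hx0⟩
  | succ k ih =>
    exact ⟨(hstep k).1, fun i => (hctmaj i _ ih.1 ih.2 _).trans ((hstep k).2 i)⟩

theorem cmma_sufficient_decrease {E ι : Type*} [NormedAddCommGroup E] {X : Set E}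
    {f r ft : E → ℝ} {c ct : ι → E → ℝ} {y y' : E} {L p : ℝ} (hp : p ≠ 0)
    (hyX : y ∈ X) (hy : ∀ i, c i y ≤ 0) (hftmaj : f y' ≤ ft y') (hfteq : ft y = f y)
    (hcteq : ∀ i, ct i y = c i y)
    (hmin : ∀ z ∈ X, (∀ i, ct i z ≤ 0) →
      ft y' + (L / p) * ‖y' - y‖ ^ p + r y' ≤ ft z + (L / p) * ‖z - y‖ ^ p + r z) :
    f y' + r y' + (L / p) * ‖y' - y‖ ^ p ≤ f y + r y := by
  have hy' := hmin y hyX fun i => (hcteq i).trans_le (hy i)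
  rw [sub_self, norm_zero, zero_rpow hp, mul_zero, hfteq] at hy'
  linarith

def kktResidualSet {n : ℕ} {ι : Type*} [Fintype ι] (X : Set (EuclideanSpace ℝ (Fin n)))
    (r : EuclideanSpace ℝ (Fin n) → ℝ) (g : EuclideanSpace ℝ (Fin n))
    (G : ι → EuclideanSpace ℝ (Fin n)) (lam : ι → ℝ) (y : EuclideanSpace ℝ (Fin n)) :
    Set (EuclideanSpace ℝ (Fin n)) :=
  {v | ∃ l ∈ subgrad r y, ∃ w ∈ normalCone X y, v = g + l + ∑ i, lam i • G i + w}

section KKTResidual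

variable {n : ℕ} {ι : Type*} [Fintype ι] {X : Set (EuclideanSpace ℝ (Fin n))}
  {r : EuclideanSpace ℝ (Fin n) → ℝ} {y l g gt : EuclideanSpace ℝ (Fin n)}
  {G Gt : ι → EuclideanSpace ℝ (Fin n)} {lam : ι → ℝ}

theorem infDist_zero_kktResidualSet_le {s : EuclideanSpace ℝ (Fin n)} (hlam : ∀ i, 0 ≤ lam i)
    (hl : l ∈ subgrad r y) (hmem : gt + l + s + ∑ i, lam i • Gt i ∈ -normalCone X y) :
    Metric.infDist 0 (kktResidualSet X r g G lam y) ≤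
      ‖gt - g‖ + ∑ i, lam i * ‖Gt i - G i‖ + ‖s‖ := by
  have hv : g + l + ∑ i, lam i • G i + -(gt + l + s + ∑ i, lam i • Gt i) =
      -((gt - g) + ∑ i, lam i • (Gt i - G i) + s) := by
    simp only [smul_sub, Finset.sum_sub_distrib]; abel
  have hmemSet : g + l + ∑ i, lam i • G i + -(gt + l + s + ∑ i, lam i • Gt i) ∈
      kktResidualSet X r g G lam y := ⟨l, hl, _, Set.mem_neg.mp hmem, rfl⟩
  calc Metric.infDist 0 (kktResidualSet X r g G lam y)
      ≤ ‖(gt - g) + ∑ i, lam i • (Gt i - G i) + s‖ :=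
        (Metric.infDist_le_dist_of_mem hmemSet).trans_eq (by rw [dist_zero_left, hv, norm_neg])
    _ ≤ ‖gt - g‖ + ‖∑ i, lam i • (Gt i - G i)‖ + ‖s‖ := norm_add₃_le
    _ ≤ ‖gt - g‖ + ∑ i, lam i * ‖Gt i - G i‖ + ‖s‖ := by
        gcongr
        refine (norm_sum_le _ _).trans_eq (Finset.sum_congr rfl fun i _ => ?_)
        rw [norm_smul, norm_of_nonneg (hlam i)]

theorem infDist_zero_kktResidualSet_le_of_rpow_le {y' : EuclideanSpace ℝ (Fin n)}
    {κ L B A : ℝ} {κi Li : ι → ℝ} (hκ : 0 < κ) (hκi : ∀ i, 0 ≤ κi i) (hL : 0 ≤ L)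
    (hLi : ∀ i, 0 ≤ Li i) (hlam0 : ∀ i, 0 ≤ lam i) (hlamB : ∀ i, lam i ≤ B)
    (hl : l ∈ subgrad r y')
    (hmem : gt + l + (L * ‖y' - y‖ ^ (κ - 1)) • (y' - y) + ∑ i, lam i • Gt i ∈
      -normalCone X y')
    (hg : ‖gt - g‖ ≤ 2 * L * ‖y' - y‖ ^ κ) (hG : ∀ i, ‖Gt i - G i‖ ≤ 2 * Li i * ‖y' - y‖ ^ κi i)
    (hA : ‖y' - y‖ ^ (κ + 1) ≤ A) :
    Metric.infDist 0 (kktResidualSet X r g G lam y') ≤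
      3 * L * A ^ (κ / (κ + 1)) + 2 * B * ∑ i, Li i * A ^ (κi i / (κ + 1)) := by
  have hpow {p : ℝ} (hp : 0 ≤ p) : ‖y' - y‖ ^ p ≤ A ^ (p / (κ + 1)) :=
    rpow_le_rpow_div_of_rpow_le (norm_nonneg _) (by linarith) hA hp
  have hsum : ∑ i, lam i * ‖Gt i - G i‖ ≤ 2 * B * ∑ i, Li i * A ^ (κi i / (κ + 1)) := by
    rw [Finset.mul_sum]
    refine Finset.sum_le_sum fun i _ => ?_
    have hGi : ‖Gt i - G i‖ ≤ 2 * Li i * A ^ (κi i / (κ + 1)) :=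
      (hG i).trans (mul_le_mul_of_nonneg_left (hpow (hκi i)) (by linarith [hLi i]))
    calc lam i * ‖Gt i - G i‖ ≤ B * (2 * Li i * A ^ (κi i / (κ + 1))) :=
          mul_le_mul (hlamB i) hGi (norm_nonneg _) ((hlam0 i).trans (hlamB i))
      _ = 2 * B * (Li i * A ^ (κi i / (κ + 1))) := by ring
  calc Metric.infDist 0 (kktResidualSet X r g G lam y')
      ≤ ‖gt - g‖ + ∑ i, lam i * ‖Gt i - G i‖ + ‖(L * ‖y' - y‖ ^ (κ - 1)) • (y' - y)‖ :=
        infDist_zero_kktResidualSet_le hlam0 hl hmem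
    _ ≤ 2 * L * A ^ (κ / (κ + 1)) + 2 * B * ∑ i, Li i * A ^ (κi i / (κ + 1)) +
        L * A ^ (κ / (κ + 1)) := by
        rw [norm_mul_rpow_sub_one_smul hL hκ.ne']
        gcongr
        · exact hg.trans (by gcongr; exact hpow hκ.le)
        · exact hpow hκ.le
    _ = 3 * L * A ^ (κ / (κ + 1)) + 2 * B * ∑ i, Li i * A ^ (κi i / (κ + 1)) := by ring

end KKTResidual

theorem cmma_kkt_complexity_general {n m : ℕ}
    (X : Set (EuclideanSpace ℝ (Fin n)))
    (f r : EuclideanSpace ℝ (Fin n) → ℝ)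
    (c : Fin m → EuclideanSpace ℝ (Fin n) → ℝ)
    (f' : EuclideanSpace ℝ (Fin n) → EuclideanSpace ℝ (Fin n))
    (c' : Fin m → EuclideanSpace ℝ (Fin n) → EuclideanSpace ℝ (Fin n))
    (κ : ℝ) (κi : Fin m → ℝ) (L : ℝ) (Li Ni : Fin m → ℝ)
    (hκ0 : 0 < κ) (hκi0 : ∀ i, 0 < κi i)
    (hL : 0 < L) (hLi : ∀ i, 0 < Li i)
    (ft : EuclideanSpace ℝ (Fin n) → EuclideanSpace ℝ (Fin n) → ℝ)
    (ct : Fin m → EuclideanSpace ℝ (Fin n) → EuclideanSpace ℝ (Fin n) → ℝ)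
    (ft' : EuclideanSpace ℝ (Fin n) → EuclideanSpace ℝ (Fin n) → EuclideanSpace ℝ (Fin n))
    (ct' : Fin m → EuclideanSpace ℝ (Fin n) → EuclideanSpace ℝ (Fin n) →
      EuclideanSpace ℝ (Fin n))
    (hftmaj : ∀ y, y ∈ X → (∀ i, c i y ≤ 0) → ∀ x, f x ≤ ft y x)
    (hfteq : ∀ y, y ∈ X → (∀ i, c i y ≤ 0) → ft y y = f y)
    (hftholder : ∀ y, y ∈ X → (∀ i, c i y ≤ 0) →
      ∀ x, ‖ft' y x - f' x‖ ≤ 2 * L * ‖x - y‖ ^ κ)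
    (hctconv : ∀ i y, y ∈ X → (∀ j, c j y ≤ 0) → ConvexOn ℝ univ (ct i y))
    (hctgrad : ∀ i y, y ∈ X → (∀ j, c j y ≤ 0) → ∀ x, HasGradientAt (ct i y) (ct' i y x) x)
    (hctmaj : ∀ i y, y ∈ X → (∀ j, c j y ≤ 0) → ∀ x, c i x ≤ ct i y x)
    (hcteq : ∀ i y, y ∈ X → (∀ j, c j y ≤ 0) → ct i y y = c i y)
    (hctholder : ∀ i y, y ∈ X → (∀ j, c j y ≤ 0) →
      ∀ x, ‖ct' i y x - c' i x‖ ≤ 2 * Li i * ‖x - y‖ ^ (κi i))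
    (hctbnd : ∀ i x y, x ∈ X → (∀ j, c j x ≤ 0) → y ∈ X → (∀ j, c j y ≤ 0) →
      ‖ct' i y x‖ ≤ Ni i)
    -- the optimal value `F*` of (P)
    (Fstar : ℝ)
    (hFlb : ∀ z ∈ X, (∀ i, c i z ≤ 0) → Fstar ≤ f z + r z)
    -- Algorithm CMMA
    (x : ℕ → EuclideanSpace ℝ (Fin n))
    (hx0X : x 0 ∈ X) (hx0 : ∀ i, c i (x 0) < 0)
    (hstep : ∀ k, x (k + 1) ∈ X ∧ (∀ i, ct i (x k) (x (k + 1)) ≤ 0) ∧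
      ∀ z ∈ X, (∀ i, ct i (x k) z ≤ 0) →
        ft (x k) (x (k + 1)) + (L / (κ + 1)) * ‖x (k + 1) - x k‖ ^ (κ + 1) + r (x (k + 1)) ≤
          ft (x k) z + (L / (κ + 1)) * ‖z - x k‖ ^ (κ + 1) + r z)
    -- Assumption 3 (dual boundedness): multipliers exist and are `≤ B` for small residuals
    (B ρ : ℝ) (hρ : 0 < ρ)
    (hKKT : ∀ k, ‖x (k + 1) - x k‖ ≤ ρ →
      ∃ (lam : Fin m → ℝ) (l : EuclideanSpace ℝ (Fin n)),
        (∀ i, 0 ≤ lam i) ∧ (∀ i, lam i ≤ B) ∧ l ∈ subgrad r (x (k + 1)) ∧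
        (ft' (x k) (x (k + 1)) + l +
            (L * ‖x (k + 1) - x k‖ ^ (κ - 1)) • (x (k + 1) - x k) +
            ∑ i, lam i • ct' i (x k) (x (k + 1))) ∈ -normalCone X (x (k + 1)) ∧
        ∀ i, lam i * ct i (x k) (x (k + 1)) = 0)
    (K : ℕ) (hK1 : 1 ≤ K)
    (hK : (κ + 1) * (f (x 0) + r (x 0) - Fstar) / (L * ρ ^ (κ + 1)) ≤ K) :
    ∃ k < K, ∃ (lam : Fin m → ℝ) (l : EuclideanSpace ℝ (Fin n)),
      (∀ i, 0 ≤ lam i) ∧ (∀ i, lam i ≤ B) ∧ l ∈ subgrad r (x (k + 1)) ∧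
      (ft' (x k) (x (k + 1)) + l +
          (L * ‖x (k + 1) - x k‖ ^ (κ - 1)) • (x (k + 1) - x k) +
          ∑ i, lam i • ct' i (x k) (x (k + 1))) ∈ -normalCone X (x (k + 1)) ∧
      (∀ i, lam i * ct i (x k) (x (k + 1)) = 0) ∧
      Metric.infDist (0 : EuclideanSpace ℝ (Fin n))
        {v | ∃ l' ∈ subgrad r (x (k + 1)), ∃ w ∈ normalCone X (x (k + 1)),
          v = f' (x (k + 1)) + l' + ∑ i, lam i • c' i (x (k + 1)) + w} ≤
        3 * L * ((κ + 1) * (f (x 0) + r (x 0) - Fstar) / (L * K)) ^ (κ / (κ + 1)) +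
          2 * B * ∑ i, Li i *
            ((κ + 1) * (f (x 0) + r (x 0) - Fstar) / (L * K)) ^ (κi i / (κ + 1)) ∧
      ∀ i, 0 < lam i → 0 ≤ -c i (x k) ∧
        -c i (x k) ≤ Ni i *
          ((κ + 1) * (f (x 0) + r (x 0) - Fstar) / (L * K)) ^ (1 / (κ + 1)) := by
  have feas := cmma_iterates_feasible hx0X (fun i => (hx0 i).le) hctmaj
    fun k => ⟨(hstep k).1, (hstep k).2.1⟩
  have hdesc (k : ℕ) : f (x (k + 1)) + r (x (k + 1)) +
      L / (κ + 1) * ‖x (k + 1) - x k‖ ^ (κ + 1) ≤ f (x k) + r (x k) :=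
    have hk := feas k
    cmma_sufficient_decrease (by linarith) hk.1 hk.2 (hftmaj _ hk.1 hk.2 _) (hfteq _ hk.1 hk.2)
      (fun i => hcteq i _ hk.1 hk.2) (hstep k).2.2
  set A := (κ + 1) * (f (x 0) + r (x 0) - Fstar) / (L * K)
  obtain ⟨k, hkK, hkA⟩ : ∃ k < K, ‖x (k + 1) - x k‖ ^ (κ + 1) ≤ A := by
    have hA : A = (f (x 0) + r (x 0) - Fstar) / (L / (κ + 1) * K) := by
      simp only [A]; field_simp
    rw [hA]
    exact exists_lt_le_div_of_add_mul_le (by positivity) hdesc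
      (fun k => hFlb _ (feas k).1 (feas k).2) hK1
  have hdρ : ‖x (k + 1) - x k‖ ≤ ρ := by
    refine (rpow_le_rpow_iff (norm_nonneg _) hρ.le (by linarith)).1 (hkA.trans ?_)
    rw [div_le_iff₀ (by positivity)] at hK ⊢
    linarith
  obtain ⟨lam, l, hlam0, hlamB, hl, hmem, hcs⟩ := hKKT k hdρ
  have hk := feas k
  refine ⟨k, hkK, lam, l, hlam0, hlamB, hl, hmem, hcs,
    infDist_zero_kktResidualSet_le_of_rpow_le hκ0 (fun i => (hκi0 i).le) hL.le
      (fun i => (hLi i).le) hlam0 hlamB hl hmem (hftholder _ hk.1 hk.2 _)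
      (fun i => hctholder i _ hk.1 hk.2 _) hkA, fun i hi => ⟨neg_nonneg.2 (hk.2 i), ?_⟩⟩
  have hN := hctbnd i _ _ (feas (k + 1)).1 (feas (k + 1)).2 hk.1 hk.2
  have hact := (hctconv i _ hk.1 hk.2).neg_le_mul_norm_sub_of_hasGradientAt
    (hctgrad i _ hk.1 hk.2 _) ((mul_eq_zero.mp (hcs i)).resolve_left hi.ne') hN (x k)
  rw [hcteq i _ hk.1 hk.2] at hact
  have hdA : ‖x (k + 1) - x k‖ ≤ A ^ (1 / (κ + 1)) := by
    simpa using rpow_le_rpow_div_of_rpow_le (norm_nonneg _) (by linarith) hkA zero_le_one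
  exact hact.trans (mul_le_mul_of_nonneg_left hdA ((norm_nonneg _).trans hN))

/-- Iteration complexity of Algorithm CMMA towards KKT points of (P)
(Theorem `iter-compl` in the paper). -/
theorem cmma_kkt_complexity {n m : ℕ}
    (X : Set (EuclideanSpace ℝ (Fin n))) (hXconv : Convex ℝ X) (hXclosed : IsClosed X)
    (f r : EuclideanSpace ℝ (Fin n) → ℝ)
    (c : Fin m → EuclideanSpace ℝ (Fin n) → ℝ)
    (f' : EuclideanSpace ℝ (Fin n) → EuclideanSpace ℝ (Fin n))
    (c' : Fin m → EuclideanSpace ℝ (Fin n) → EuclideanSpace ℝ (Fin n))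
    (hf : ∀ x, HasGradientAt f (f' x) x) (hf'cont : Continuous f')
    (hc : ∀ i x, HasGradientAt (c i) (c' i x) x) (hc'cont : ∀ i, Continuous (c' i))
    (hrconv : ConvexOn ℝ univ r)
    (κ : ℝ) (κi : Fin m → ℝ) (L : ℝ) (Li Ni : Fin m → ℝ)
    (hκ0 : 0 < κ) (hκ1 : κ ≤ 1) (hκi0 : ∀ i, 0 < κi i) (hκi1 : ∀ i, κi i ≤ 1)
    (hL : 0 < L) (hLi : ∀ i, 0 < Li i) (hNi : ∀ i, 0 < Ni i)
    (ft : EuclideanSpace ℝ (Fin n) → EuclideanSpace ℝ (Fin n) → ℝ)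
    (ct : Fin m → EuclideanSpace ℝ (Fin n) → EuclideanSpace ℝ (Fin n) → ℝ)
    (ft' : EuclideanSpace ℝ (Fin n) → EuclideanSpace ℝ (Fin n) → EuclideanSpace ℝ (Fin n))
    (ct' : Fin m → EuclideanSpace ℝ (Fin n) → EuclideanSpace ℝ (Fin n) →
      EuclideanSpace ℝ (Fin n))
    (hftconv : ∀ y, y ∈ X → (∀ i, c i y ≤ 0) → ConvexOn ℝ univ (ft y))
    (hftgrad : ∀ y, y ∈ X → (∀ i, c i y ≤ 0) → ∀ x, HasGradientAt (ft y) (ft' y x) x)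
    (hftmaj : ∀ y, y ∈ X → (∀ i, c i y ≤ 0) → ∀ x, f x ≤ ft y x)
    (hfteq : ∀ y, y ∈ X → (∀ i, c i y ≤ 0) → ft y y = f y)
    (hftholder : ∀ y, y ∈ X → (∀ i, c i y ≤ 0) →
      ∀ x, ‖ft' y x - f' x‖ ≤ 2 * L * ‖x - y‖ ^ κ)
    (hctconv : ∀ i y, y ∈ X → (∀ j, c j y ≤ 0) → ConvexOn ℝ univ (ct i y))
    (hctgrad : ∀ i y, y ∈ X → (∀ j, c j y ≤ 0) → ∀ x, HasGradientAt (ct i y) (ct' i y x) x)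
    (hctmaj : ∀ i y, y ∈ X → (∀ j, c j y ≤ 0) → ∀ x, c i x ≤ ct i y x)
    (hcteq : ∀ i y, y ∈ X → (∀ j, c j y ≤ 0) → ct i y y = c i y)
    (hctholder : ∀ i y, y ∈ X → (∀ j, c j y ≤ 0) →
      ∀ x, ‖ct' i y x - c' i x‖ ≤ 2 * Li i * ‖x - y‖ ^ (κi i))
    (hctbnd : ∀ i x y, x ∈ X → (∀ j, c j x ≤ 0) → y ∈ X → (∀ j, c j y ≤ 0) →
      ‖ct' i y x‖ ≤ Ni i)
    -- the optimal value `F*` of (P)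
    (Fstar : ℝ)
    (hFlb : ∀ z ∈ X, (∀ i, c i z ≤ 0) → Fstar ≤ f z + r z)
    (hFatt : ∃ z ∈ X, (∀ i, c i z ≤ 0) ∧ f z + r z = Fstar)
    -- Algorithm CMMA
    (x : ℕ → EuclideanSpace ℝ (Fin n))
    (hx0X : x 0 ∈ X) (hx0 : ∀ i, c i (x 0) < 0)
    (hstep : ∀ k, x (k + 1) ∈ X ∧ (∀ i, ct i (x k) (x (k + 1)) ≤ 0) ∧
      ∀ z ∈ X, (∀ i, ct i (x k) z ≤ 0) →
        ft (x k) (x (k + 1)) + (L / (κ + 1)) * ‖x (k + 1) - x k‖ ^ (κ + 1) + r (x (k + 1)) ≤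
          ft (x k) z + (L / (κ + 1)) * ‖z - x k‖ ^ (κ + 1) + r z)
    -- Assumption 3 (dual boundedness): multipliers exist and are `≤ B` for small residuals
    (B ρ : ℝ) (hB : 0 < B) (hρ : 0 < ρ)
    (hKKT : ∀ k, ‖x (k + 1) - x k‖ ≤ ρ →
      ∃ (lam : Fin m → ℝ) (l : EuclideanSpace ℝ (Fin n)),
        (∀ i, 0 ≤ lam i) ∧ (∀ i, lam i ≤ B) ∧ l ∈ subgrad r (x (k + 1)) ∧
        (ft' (x k) (x (k + 1)) + l +
            (L * ‖x (k + 1) - x k‖ ^ (κ - 1)) • (x (k + 1) - x k) +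
            ∑ i, lam i • ct' i (x k) (x (k + 1))) ∈ -normalCone X (x (k + 1)) ∧
        ∀ i, lam i * ct i (x k) (x (k + 1)) = 0)
    (K : ℕ) (hK1 : 1 ≤ K)
    (hK : (κ + 1) * (f (x 0) + r (x 0) - Fstar) / (L * ρ ^ (κ + 1)) ≤ K) :
    ∃ k < K, ∃ (lam : Fin m → ℝ) (l : EuclideanSpace ℝ (Fin n)),
      (∀ i, 0 ≤ lam i) ∧ (∀ i, lam i ≤ B) ∧ l ∈ subgrad r (x (k + 1)) ∧
      (ft' (x k) (x (k + 1)) + l +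
          (L * ‖x (k + 1) - x k‖ ^ (κ - 1)) • (x (k + 1) - x k) +
          ∑ i, lam i • ct' i (x k) (x (k + 1))) ∈ -normalCone X (x (k + 1)) ∧
      (∀ i, lam i * ct i (x k) (x (k + 1)) = 0) ∧
      Metric.infDist (0 : EuclideanSpace ℝ (Fin n))
        {v | ∃ l' ∈ subgrad r (x (k + 1)), ∃ w ∈ normalCone X (x (k + 1)),
          v = f' (x (k + 1)) + l' + ∑ i, lam i • c' i (x (k + 1)) + w} ≤
        3 * L * ((κ + 1) * (f (x 0) + r (x 0) - Fstar) / (L * K)) ^ (κ / (κ + 1)) +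
          2 * B * ∑ i, Li i *
            ((κ + 1) * (f (x 0) + r (x 0) - Fstar) / (L * K)) ^ (κi i / (κ + 1)) ∧
      ∀ i, 0 < lam i → 0 ≤ -c i (x k) ∧
        -c i (x k) ≤ Ni i *
          ((κ + 1) * (f (x 0) + r (x 0) - Fstar) / (L * K)) ^ (1 / (κ + 1)) :=
  cmma_kkt_complexity_general X f r c f' c' κ κi L Li Ni hκ0 hκi0 hL hLi ft ct ft' ct' hftmaj hfteq
    hftholder hctconv hctgrad hctmaj hcteq hctholder hctbnd Fstar hFlb x hx0X hx0 hstep B ρ hρ hKKT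
    K hK1 hK
end

section
/- Let h¹, h² : ℝⁿ → ℝ be convex and differentiable, set h = h¹ − h², and suppose ∇h and ∇h¹ are both (L,κ)-Hölder continuous with L > 0 and κ ∈ (0,1]. For y ∈ ℝⁿ define h̃(x|y) := h¹(x) − h²(y) − ⟨∇h²(y), x − y⟩. Then: (a) h̃(·|y) is convex and differentiable; (b) h̃(x|y) ≥ h(x) for all x ∈ ℝⁿ, with h̃(y|y) = h(y); (c) ‖∇h̃(x|y) − ∇h(x)‖ ≤ 2L‖x − y‖^κ for all x, y ∈ ℝⁿ; (d) if S ⊆ ℝⁿ and M > 0 satisfy ‖∇h¹(x)‖ ≤ M and ‖∇h²(x)‖ ≤ M for all x ∈ S, then ‖∇h̃(x|y)‖ ≤ 2M for all x, y ∈ S. -/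
/-!
Linearizing the convex function `h²` at `y` gives an affine minorant of `h²` (first-order
characterization of convexity, proved by restricting to the segment `[y, x]`), so `h̃(·|y)` is
`h¹` minus an affine function: convex, a majorant of `h`, and exact at `y`. Its gradient
`∇h¹(x) − ∇h²(y)` differs from `∇h(x)` by `∇h²(x) − ∇h²(y)`, whose norm is at most the sum of
the oscillations of `∇h¹` and `∇h = ∇h¹ − ∇h²`.
-/

open scoped RealInnerProductSpace
open Set

theorem ConvexOn.add_le_of_hasFDerivAt {F : Type*} [NormedAddCommGroup F] [NormedSpace ℝ F]
    {s : Set F} {f : F → ℝ} {f' : StrongDual ℝ F} {x y : F}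
    (hf : ConvexOn ℝ s f) (hx : x ∈ s) (hy : y ∈ s) (hf' : HasFDerivAt f f' y) :
    f y + f' (x - y) ≤ f x := by
  have hsegment : ConvexOn ℝ (Icc (0 : ℝ) 1) (f ∘ AffineMap.lineMap y x) :=
    (hf.comp_affineMap _).subset (fun t ht => hf.1.lineMap_mem hy hx ht) (convex_Icc 0 1)
  have hderiv : HasDerivAt (f ∘ AffineMap.lineMap (k := ℝ) y x) (f' (x - y)) 0 := by
    rw [← AffineMap.lineMap_apply_zero (k := ℝ) y x] at hf'
    exact hf'.comp_hasDerivAt 0 AffineMap.hasDerivAt_lineMap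
  have hslope := hsegment.le_slope_of_hasDerivAt (left_mem_Icc.2 zero_le_one)
    (right_mem_Icc.2 zero_le_one) one_pos hderiv
  simp only [slope_def_field, Function.comp_apply, AffineMap.lineMap_apply_zero,
    AffineMap.lineMap_apply_one, sub_zero, div_one] at hslope
  linarith

theorem norm_sub_le_norm_sub_add_norm_sub_sub_sub {F : Type*} [SeminormedAddCommGroup F]
    (a b c d : F) : ‖c - d‖ ≤ ‖a - b‖ + ‖(a - c) - (b - d)‖ := by
  rw [show c - d = (a - b) - ((a - c) - (b - d)) by abel]
  exact norm_sub_le _ _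

variable {E : Type*} [NormedAddCommGroup E] [InnerProductSpace ℝ E]

section Gradient

variable [CompleteSpace E]

theorem ConvexOn.add_inner_le_of_hasGradientAt_s5 {s : Set E} {f : E → ℝ} {f' x y : E}
    (hf : ConvexOn ℝ s f) (hx : x ∈ s) (hy : y ∈ s) (hf' : HasGradientAt f f' y) :
    f y + ⟪f', x - y⟫ ≤ f x := by
  simpa using hf.add_le_of_hasFDerivAt hx hy hf'.hasFDerivAt

theorem HasGradientAt.sub {f g : E → ℝ} {f' g' x : E} (hf : HasGradientAt f f' x)
    (hg : HasGradientAt g g' x) : HasGradientAt (fun z => f z - g z) (f' - g') x := by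
  rw [hasGradientAt_iff_hasFDerivAt, map_sub]
  exact hf.hasFDerivAt.sub hg.hasFDerivAt

theorem hasGradientAt_inner_sub (v y x : E) : HasGradientAt (fun z => ⟪v, z - y⟫) v x := by
  rw [hasGradientAt_iff_hasFDerivAt]
  simpa [inner_sub_right] using
    ((InnerProductSpace.toDual ℝ E v).hasFDerivAt (x := x)).sub_const ⟪v, y⟫

end Gradient

/-- `h̃(x|y)`, with `g₂` standing for `∇h²`. -/
def dcSurrogate (h₁ h₂ : E → ℝ) (g₂ : E → E) (y x : E) : ℝ :=
  h₁ x - h₂ y - ⟪g₂ y, x - y⟫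

theorem convexOn_dcSurrogate {s : Set E} {h₁ : E → ℝ} (h₂ : E → ℝ) (g₂ : E → E) (y : E)
    (hh₁ : ConvexOn ℝ s h₁) : ConvexOn ℝ s (dcSurrogate h₁ h₂ g₂ y) := by
  have hsplit :
      dcSurrogate h₁ h₂ g₂ y = h₁ - ⇑(innerₛₗ ℝ (g₂ y)) + fun _ => ⟪g₂ y, y⟫ - h₂ y := by
    ext x
    simp only [dcSurrogate, inner_sub_right, Pi.add_apply, Pi.sub_apply, innerₛₗ_apply_apply]
    ring
  rw [hsplit]
  exact (hh₁.sub ((innerₛₗ ℝ (g₂ y)).concaveOn hh₁.1)).add_const _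

theorem hasGradientAt_dcSurrogate [CompleteSpace E] {h₁ : E → ℝ} (h₂ : E → ℝ) (g₂ : E → E)
    (y : E) {g x : E} (hh₁ : HasGradientAt h₁ g x) :
    HasGradientAt (dcSurrogate h₁ h₂ g₂ y) (g - g₂ y) x := by
  have h := (hh₁.sub (hasGradientAt_const x (h₂ y))).sub (hasGradientAt_inner_sub (g₂ y) y x)
  rw [sub_zero] at h
  exact h

theorem sub_le_dcSurrogate [CompleteSpace E] {s : Set E} {h₂ : E → ℝ} {g₂ : E → E} {x y : E}
    (h₁ : E → ℝ) (hh₂ : ConvexOn ℝ s h₂) (hx : x ∈ s) (hy : y ∈ s)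
    (hg₂ : HasGradientAt h₂ (g₂ y) y) :
    h₁ x - h₂ x ≤ dcSurrogate h₁ h₂ g₂ y x := by
  have hlin := hh₂.add_inner_le_of_hasGradientAt_s5 hx hy hg₂
  rw [dcSurrogate]
  linarith

theorem dcSurrogate_self (h₁ h₂ : E → ℝ) (g₂ : E → E) (y : E) :
    dcSurrogate h₁ h₂ g₂ y y = h₁ y - h₂ y := by
  simp [dcSurrogate]

theorem dc_surrogate_general {n : ℕ}
    (h1 h2 : EuclideanSpace ℝ (Fin n) → ℝ)
    (g1 g2 : EuclideanSpace ℝ (Fin n) → EuclideanSpace ℝ (Fin n))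
    (hconv1 : ConvexOn ℝ univ h1) (hconv2 : ConvexOn ℝ univ h2)
    (hg1 : ∀ x, HasGradientAt h1 (g1 x) x) (hg2 : ∀ x, HasGradientAt h2 (g2 x) x)
    (L κ : ℝ)
    -- ∇h = ∇h¹ − ∇h² is (L,κ)-Hölder continuous
    (hHh : ∀ x y, ‖(g1 x - g2 x) - (g1 y - g2 y)‖ ≤ L * ‖x - y‖ ^ κ)
    -- ∇h¹ is (L,κ)-Hölder continuous
    (hH1 : ∀ x y, ‖g1 x - g1 y‖ ≤ L * ‖x - y‖ ^ κ) :
    -- (a) h̃(·|y) is convex and differentiable with gradient ∇h̃(x|y) = ∇h¹(x) − ∇h²(y)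
    (∀ y, ConvexOn ℝ univ (fun x => h1 x - h2 y - ⟪g2 y, x - y⟫) ∧
      ∀ x, HasGradientAt (fun x => h1 x - h2 y - ⟪g2 y, x - y⟫) (g1 x - g2 y) x) ∧
    -- (b) majorization with equality at the base point
    (∀ x y, h1 x - h2 x ≤ h1 x - h2 y - ⟪g2 y, x - y⟫) ∧
    (∀ y, h1 y - h2 y - ⟪g2 y, y - y⟫ = h1 y - h2 y) ∧
    -- (c) the gradient error bound, where ∇h(x) = ∇h¹(x) − ∇h²(x)
    (∀ x, HasGradientAt (fun z => h1 z - h2 z) (g1 x - g2 x) x) ∧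
    (∀ x y, ‖(g1 x - g2 y) - (g1 x - g2 x)‖ ≤ 2 * L * ‖x - y‖ ^ κ) ∧
    -- (d) boundedness of the surrogate gradient on a set where both gradients are bounded
    (∀ (S : Set (EuclideanSpace ℝ (Fin n))) (M : ℝ), 0 < M →
      (∀ x ∈ S, ‖g1 x‖ ≤ M) → (∀ x ∈ S, ‖g2 x‖ ≤ M) →
      ∀ x ∈ S, ∀ y ∈ S, ‖g1 x - g2 y‖ ≤ 2 * M) := by
  refine ⟨fun y => ⟨convexOn_dcSurrogate h2 g2 y hconv1,
      fun x => hasGradientAt_dcSurrogate h2 g2 y (hg1 x)⟩,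
    fun x y => sub_le_dcSurrogate h1 hconv2 (mem_univ x) (mem_univ y) (hg2 y),
    fun y => dcSurrogate_self h1 h2 g2 y, fun x => (hg1 x).sub (hg2 x), fun x y => ?_,
    fun S M _ hM1 hM2 x hx y hy => ?_⟩
  · rw [sub_sub_sub_cancel_left]
    linarith [norm_sub_le_norm_sub_add_norm_sub_sub_sub (g1 x) (g1 y) (g2 x) (g2 y), hH1 x y,
      hHh x y]
  · linarith [norm_sub_le (g1 x) (g2 y), hM1 x hx, hM2 y hy]

/-- (Proposition 3 in the paper: DC surrogates.) For `h = h¹ − h²` a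
difference of convex functions, the surrogate `h̃(x|y) = h¹(x) − h²(y) − ⟨∇h²(y), x − y⟩`
is a convex differentiable majorant of `h`, exact at `y`, whose gradient
`∇h̃(x|y) = ∇h¹(x) − ∇h²(y)` satisfies `‖∇h̃(x|y) − ∇h(x)‖ ≤ 2L‖x − y‖^κ`, and is
bounded by `2M` when both gradients are bounded by `M` on a set `S`. -/
theorem dc_surrogate {n : ℕ}
    (h1 h2 : EuclideanSpace ℝ (Fin n) → ℝ)
    (g1 g2 : EuclideanSpace ℝ (Fin n) → EuclideanSpace ℝ (Fin n))
    (hconv1 : ConvexOn ℝ univ h1) (hconv2 : ConvexOn ℝ univ h2)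
    (hg1 : ∀ x, HasGradientAt h1 (g1 x) x) (hg2 : ∀ x, HasGradientAt h2 (g2 x) x)
    (L κ : ℝ) (hL : 0 < L) (hκ0 : 0 < κ) (hκ1 : κ ≤ 1)
    -- ∇h = ∇h¹ − ∇h² is (L,κ)-Hölder continuous
    (hHh : ∀ x y, ‖(g1 x - g2 x) - (g1 y - g2 y)‖ ≤ L * ‖x - y‖ ^ κ)
    -- ∇h¹ is (L,κ)-Hölder continuous
    (hH1 : ∀ x y, ‖g1 x - g1 y‖ ≤ L * ‖x - y‖ ^ κ) :
    -- (a) h̃(·|y) is convex and differentiable with gradient ∇h̃(x|y) = ∇h¹(x) − ∇h²(y)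
    (∀ y, ConvexOn ℝ univ (fun x => h1 x - h2 y - ⟪g2 y, x - y⟫) ∧
      ∀ x, HasGradientAt (fun x => h1 x - h2 y - ⟪g2 y, x - y⟫) (g1 x - g2 y) x) ∧
    -- (b) majorization with equality at the base point
    (∀ x y, h1 x - h2 x ≤ h1 x - h2 y - ⟪g2 y, x - y⟫) ∧
    (∀ y, h1 y - h2 y - ⟪g2 y, y - y⟫ = h1 y - h2 y) ∧
    -- (c) the gradient error bound, where ∇h(x) = ∇h¹(x) − ∇h²(x)
    (∀ x, HasGradientAt (fun z => h1 z - h2 z) (g1 x - g2 x) x) ∧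
    (∀ x y, ‖(g1 x - g2 y) - (g1 x - g2 x)‖ ≤ 2 * L * ‖x - y‖ ^ κ) ∧
    -- (d) boundedness of the surrogate gradient on a set where both gradients are bounded
    (∀ (S : Set (EuclideanSpace ℝ (Fin n))) (M : ℝ), 0 < M →
      (∀ x ∈ S, ‖g1 x‖ ≤ M) → (∀ x ∈ S, ‖g2 x‖ ≤ M) →
      ∀ x ∈ S, ∀ y ∈ S, ‖g1 x - g2 y‖ ≤ 2 * M) :=
  dc_surrogate_general h1 h2 g1 g2 hconv1 hconv2 hg1 hg2 L κ hHh hH1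
end

section
/- Let h² : ℝⁿ → ℝ^d be differentiable with Jacobian Dh² (ℓ,κ)-Hölder continuous in the operator norm (ℓ > 0, κ ∈ (0,1]), and let h¹ : ℝ^d → ℝ be convex and differentiable with ∇h¹ L-Lipschitz and ‖∇h¹(u)‖ ≤ M for all u ∈ ℝ^d. Set h(x) = h¹(h²(x)) and, for y ∈ ℝⁿ, define h̃(x|y) := h¹(h²(y) + Dh²(y)(x − y)) + (Mℓ/(κ+1))‖x − y‖^{κ+1}. Then: (a) h̃(·|y) is convex; (b) h̃(x|y) ≥ h(x) for all x ∈ ℝⁿ, with h̃(y|y) = h(y); (c) for every convex compact set K ⊆ ℝⁿ of diameter at most D on which sup_{x∈K}‖Dh²(x)‖ ≤ G, one has ‖∇h̃(x|y) − ∇h(x)‖ ≤ (2Mℓ + GLℓD/(κ+1))·‖x − y‖^κ for all x, y ∈ K. -/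
open scoped RealInnerProductSpace
open Real Set

/-!
Hölder continuity of `Dh²` gives the Taylor bound
`‖h²(x) - h²(y) - Dh²(y)(x - y)‖ ≤ ℓ/(κ+1) ‖x - y‖^(κ+1)` (compare the remainder along the
segment with `t ↦ ℓ/(κ+1) ‖x - y‖^(κ+1) t^(κ+1)`), and `h¹` is `M`-Lipschitz since `‖∇h¹‖ ≤ M`;
so the power term absorbs the linearization error of `h¹ ∘ h²`. The surrogate is convex as `h¹`
composed with an affine map plus a multiple of a convex power of a norm. Its gradient minus `∇h(x)`
splits into `(Dh²(y) - Dh²(x))^* ∇h¹(u)`, `Dh²(x)^* (∇h¹(u) - ∇h¹(h²(x)))`, with `u` the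
linearization of `h²` at `y`, and the gradient of the power term; the Taylor bound together with
`‖x - y‖ ≤ D` turns the middle one into `G L ℓ D/(κ+1) ‖x - y‖^κ`, the outer ones are `Mℓ‖x - y‖^κ`.
-/

section Normed

variable {E F : Type*} [NormedAddCommGroup E] [NormedSpace ℝ E]
  [NormedAddCommGroup F] [NormedSpace ℝ F]

theorem norm_sub_sub_fderiv_le_of_holder {f : E → F} {f' : E → E →L[ℝ] F} {ℓ κ : ℝ} {y : E}
    (hf : ∀ x, HasFDerivAt f (f' x) x) (hκ : 0 ≤ κ)
    (hf' : ∀ x, ‖f' x - f' y‖ ≤ ℓ * ‖x - y‖ ^ κ) (x : E) :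
    ‖f x - f y - f' y (x - y)‖ ≤ ℓ / (κ + 1) * ‖x - y‖ ^ (κ + 1) := by
  set v := x - y
  let φ : ℝ → F := fun t => f (y + t • v) - f y - t • f' y v
  let B : ℝ → ℝ := fun t => ℓ / (κ + 1) * ‖v‖ ^ (κ + 1) * t ^ (κ + 1)
  have hκ1 : κ + 1 ≠ 0 := by linarith
  have hφ : ∀ t, HasDerivAt φ (f' (y + t • v) v - f' y v) t := by
    intro t
    have hline : HasDerivAt (fun t : ℝ => y + t • v) v t := by
      simpa using ((hasDerivAt_id t).smul_const v).const_add y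
    exact (((hf _).comp_hasDerivAt t hline).sub_const (f y)).sub
      (by simpa using (hasDerivAt_id t).smul_const (f' y v))
  have hB : ∀ t, HasDerivAt B (ℓ / (κ + 1) * ‖v‖ ^ (κ + 1) * ((κ + 1) * t ^ (κ + 1 - 1))) t :=
    fun t => (Real.hasDerivAt_rpow_const (Or.inr (by linarith))).const_mul _
  have hbound : ∀ t ∈ Ico (0 : ℝ) 1, ‖f' (y + t • v) v - f' y v‖ ≤
      ℓ / (κ + 1) * ‖v‖ ^ (κ + 1) * ((κ + 1) * t ^ (κ + 1 - 1)) := by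
    rintro t ⟨ht, -⟩
    calc ‖f' (y + t • v) v - f' y v‖ = ‖(f' (y + t • v) - f' y) v‖ := rfl
      _ ≤ ℓ * ‖t • v‖ ^ κ * ‖v‖ := by
        refine ((f' _ - f' y).le_opNorm v).trans ?_
        gcongr
        simpa using hf' (y + t • v)
      _ = ℓ / (κ + 1) * ‖v‖ ^ (κ + 1) * ((κ + 1) * t ^ (κ + 1 - 1)) := by
        rw [norm_smul, Real.norm_of_nonneg ht, Real.mul_rpow ht (norm_nonneg v),
          Real.rpow_add_one' (norm_nonneg v) hκ1, add_sub_cancel_right]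
        field_simp
  have h0 : ‖φ 0‖ ≤ B 0 := by simp [φ, B, Real.zero_rpow hκ1]
  have h1 := image_norm_le_of_norm_deriv_right_le_deriv_boundary
    (fun t _ => (hφ t).continuousAt.continuousWithinAt) (fun t _ => (hφ t).hasDerivWithinAt)
    h0 hB hbound (right_mem_Icc.2 zero_le_one)
  simpa [φ, B, v] using h1

theorem convexOn_norm_sub_rpow (y : E) {p : ℝ} (hp : 1 ≤ p) :
    ConvexOn ℝ univ fun x : E => ‖x - y‖ ^ p := by
  refine ⟨convex_univ, fun x _ z _ a b ha hb hab => ?_⟩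
  have htri : ‖a • x + b • z - y‖ ≤ a * ‖x - y‖ + b * ‖z - y‖ := by
    calc ‖a • x + b • z - y‖ = ‖a • (x - y) + b • (z - y)‖ := by
          congr 1
          linear_combination (norm := module) hab • y
      _ ≤ a * ‖x - y‖ + b * ‖z - y‖ := by
          refine (norm_add_le _ _).trans_eq ?_
          rw [norm_smul, norm_smul, Real.norm_of_nonneg ha, Real.norm_of_nonneg hb]
  calc ‖a • x + b • z - y‖ ^ p ≤ (a * ‖x - y‖ + b * ‖z - y‖) ^ p := by gcongr
    _ ≤ a * ‖x - y‖ ^ p + b * ‖z - y‖ ^ p :=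
      (convexOn_rpow hp).2 (norm_nonneg (x - y)) (norm_nonneg (z - y)) ha hb hab

theorem ConvexOn.comp_const_add_clm_sub {f : F → ℝ} (hf : ConvexOn ℝ univ f) (A : E →L[ℝ] F)
    (c : F) (y : E) : ConvexOn ℝ univ fun x => f (c + A (x - y)) := by
  let g : E →ᵃ[ℝ] F := ⟨fun x => c + A (x - y), A, fun p v => by
    simp only [vadd_eq_add, map_sub, map_add, ContinuousLinearMap.coe_coe]; abel⟩
  exact preimage_univ (f := g) ▸ hf.comp_affineMap g

theorem norm_rpow_sub_one_smul_self {κ c : ℝ} (hκ : κ ≠ 0) (hc : 0 ≤ c) (v : E) :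
    ‖(c * ‖v‖ ^ (κ - 1)) • v‖ = c * ‖v‖ ^ κ := by
  rw [norm_smul, Real.norm_of_nonneg (by positivity), mul_assoc,
    ← Real.rpow_add_one' (norm_nonneg v) (by simpa), sub_add_cancel]

end Normed

section Majorization

variable {E F : Type*} [NormedAddCommGroup E] [NormedSpace ℝ E]
  [NormedAddCommGroup F] [InnerProductSpace ℝ F] [CompleteSpace F]

theorem norm_sub_le_of_hasGradientAt_of_norm_le {f : F → ℝ} {f' : F → F} {M : ℝ}
    (hf : ∀ u, HasGradientAt f (f' u) u) (hM : ∀ u, ‖f' u‖ ≤ M) (u v : F) :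
    ‖f u - f v‖ ≤ M * ‖u - v‖ :=
  Convex.norm_image_sub_le_of_norm_hasFDerivWithin_le
    (fun w _ => (hf w).hasFDerivAt.hasFDerivWithinAt)
    (fun w _ => by rw [LinearIsometryEquiv.norm_map]; exact hM w) convex_univ (mem_univ v)
    (mem_univ u)

theorem comp_le_comp_linearization_add_rpow {h1 : F → ℝ} {g1 : F → F} {h2 : E → F}
    {D2 : E → E →L[ℝ] F} {M ℓ κ : ℝ} (hg1 : ∀ u, HasGradientAt h1 (g1 u) u)
    (hg1bnd : ∀ u, ‖g1 u‖ ≤ M) (hD2 : ∀ x, HasFDerivAt h2 (D2 x) x) (hκ : 0 ≤ κ)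
    (hD2holder : ∀ x y, ‖D2 x - D2 y‖ ≤ ℓ * ‖x - y‖ ^ κ) (y x : E) :
    h1 (h2 x) ≤ h1 (h2 y + D2 y (x - y)) + M * ℓ / (κ + 1) * ‖x - y‖ ^ (κ + 1) := by
  have hM : 0 ≤ M := (norm_nonneg _).trans (hg1bnd 0)
  have hLip := norm_sub_le_of_hasGradientAt_of_norm_le hg1 hg1bnd (h2 x) (h2 y + D2 y (x - y))
  have hTaylor := norm_sub_sub_fderiv_le_of_holder hD2 hκ (fun z => hD2holder z y) x
  rw [← sub_sub] at hLip
  calc h1 (h2 x) ≤ h1 (h2 y + D2 y (x - y)) + M * ‖h2 x - h2 y - D2 y (x - y)‖ := by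
        linarith [Real.le_norm_self (h1 (h2 x) - h1 (h2 y + D2 y (x - y)))]
    _ ≤ h1 (h2 y + D2 y (x - y)) + M * (ℓ / (κ + 1) * ‖x - y‖ ^ (κ + 1)) := by gcongr
    _ = h1 (h2 y + D2 y (x - y)) + M * ℓ / (κ + 1) * ‖x - y‖ ^ (κ + 1) := by ring

end Majorization

section InnerProduct

variable {E F : Type*} [NormedAddCommGroup E] [InnerProductSpace ℝ E] [CompleteSpace E]
  [NormedAddCommGroup F] [InnerProductSpace ℝ F] [CompleteSpace F]

open InnerProductSpace ContinuousLinearMap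

theorem HasGradientAt.add {f g : E → ℝ} {f' g' x : E} (hf : HasGradientAt f f' x)
    (hg : HasGradientAt g g' x) : HasGradientAt (fun z => f z + g z) (f' + g') x := by
  rw [hasGradientAt_iff_hasFDerivAt, map_add]
  exact hf.hasFDerivAt.add hg.hasFDerivAt

theorem HasGradientAt.const_mul {f : E → ℝ} {f' x : E} (hf : HasGradientAt f f' x) (c : ℝ) :
    HasGradientAt (fun z => c * f z) (c • f') x := by
  rw [hasGradientAt_iff_hasFDerivAt, map_smul]
  exact hf.hasFDerivAt.const_mul c

theorem HasGradientAt.comp_hasFDerivAt {f : F → ℝ} {g : E → F} {A : E →L[ℝ] F} {v : F} {x : E}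
    (hf : HasGradientAt f v (g x)) (hg : HasFDerivAt g A x) :
    HasGradientAt (fun z => f (g z)) (adjoint A v) x := by
  have hdual : toDual ℝ E (adjoint A v) = (toDual ℝ F v).comp A := by
    ext w
    simp [toDual_apply_apply, adjoint_inner_left]
  rw [hasGradientAt_iff_hasFDerivAt, hdual]
  exact hf.hasFDerivAt.comp x hg

theorem hasGradientAt_norm_sub_rpow (y x : E) {p : ℝ} (hp : 1 < p) :
    HasGradientAt (fun z => ‖z - y‖ ^ p) ((p * ‖x - y‖ ^ (p - 2)) • (x - y)) x := by
  have hdual : toDual ℝ E ((p * ‖x - y‖ ^ (p - 2)) • (x - y)) =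
      ((p * ‖x - y‖ ^ (p - 2)) • innerSL ℝ (x - y)).comp (ContinuousLinearMap.id ℝ E) := by
    ext w
    simp [toDual_apply_apply]
  rw [hasGradientAt_iff_hasFDerivAt, hdual]
  exact (hasFDerivAt_norm_rpow (x - y) hp).comp x ((hasFDerivAt_id x).sub_const y)

theorem norm_adjoint_apply_le (A : E →L[ℝ] F) (w : F) : ‖adjoint A w‖ ≤ ‖A‖ * ‖w‖ :=
  ((adjoint A).le_opNorm w).trans_eq (by rw [LinearIsometryEquiv.norm_map])

theorem norm_gradient_linearization_sub_gradient_le {g1 : F → F} {h2 : E → F}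
    {D2 : E → E →L[ℝ] F} {L M ℓ κ G D : ℝ} (hD2 : ∀ x, HasFDerivAt h2 (D2 x) x)
    (hL : 0 ≤ L) (hℓ : 0 ≤ ℓ) (hκ : 0 < κ) (hg1lip : ∀ u v, ‖g1 u - g1 v‖ ≤ L * ‖u - v‖)
    (hg1bnd : ∀ u, ‖g1 u‖ ≤ M) (hD2holder : ∀ x y, ‖D2 x - D2 y‖ ≤ ℓ * ‖x - y‖ ^ κ)
    {x y : E} (hG : ‖D2 x‖ ≤ G) (hD : ‖x - y‖ ≤ D) :
    ‖(adjoint (D2 y) (g1 (h2 y + D2 y (x - y))) + (M * ℓ * ‖x - y‖ ^ (κ - 1)) • (x - y)) -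
        adjoint (D2 x) (g1 (h2 x))‖ ≤
      (2 * M * ℓ + G * L * ℓ * D / (κ + 1)) * ‖x - y‖ ^ κ := by
  set u := h2 y + D2 y (x - y)
  have hM : 0 ≤ M := (norm_nonneg _).trans (hg1bnd 0)
  have hsplit : (adjoint (D2 y) (g1 u) + (M * ℓ * ‖x - y‖ ^ (κ - 1)) • (x - y)) -
      adjoint (D2 x) (g1 (h2 x)) = adjoint (D2 y - D2 x) (g1 u) +
        adjoint (D2 x) (g1 u - g1 (h2 x)) + (M * ℓ * ‖x - y‖ ^ (κ - 1)) • (x - y) := by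
    simp only [map_sub, sub_apply]
    abel
  have hHolder : ‖adjoint (D2 y - D2 x) (g1 u)‖ ≤ M * ℓ * ‖x - y‖ ^ κ :=
    calc ‖adjoint (D2 y - D2 x) (g1 u)‖ ≤ ‖D2 y - D2 x‖ * ‖g1 u‖ := norm_adjoint_apply_le _ _
      _ ≤ ℓ * ‖x - y‖ ^ κ * M := by
        rw [norm_sub_rev x y]
        gcongr
        exacts [hD2holder y x, hg1bnd u]
      _ = M * ℓ * ‖x - y‖ ^ κ := by ring
  have hTaylor : ‖u - h2 x‖ ≤ ℓ / (κ + 1) * (‖x - y‖ ^ κ * D) :=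
    calc ‖u - h2 x‖ = ‖h2 x - h2 y - D2 y (x - y)‖ := by rw [← norm_neg, neg_sub, sub_sub]
      _ ≤ ℓ / (κ + 1) * ‖x - y‖ ^ (κ + 1) :=
        norm_sub_sub_fderiv_le_of_holder hD2 hκ.le (fun z => hD2holder z y) x
      _ ≤ ℓ / (κ + 1) * (‖x - y‖ ^ κ * D) := by
        rw [Real.rpow_add_one' (norm_nonneg _) (by linarith)]
        gcongr
  have hLip : ‖adjoint (D2 x) (g1 u - g1 (h2 x))‖ ≤ G * L * ℓ * D / (κ + 1) * ‖x - y‖ ^ κ :=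
    calc ‖adjoint (D2 x) (g1 u - g1 (h2 x))‖ ≤ ‖D2 x‖ * ‖g1 u - g1 (h2 x)‖ :=
          norm_adjoint_apply_le _ _
      _ ≤ G * (L * (ℓ / (κ + 1) * (‖x - y‖ ^ κ * D))) := by
        gcongr
        · exact (norm_nonneg _).trans hG
        · exact (hg1lip _ _).trans (by gcongr)
      _ = G * L * ℓ * D / (κ + 1) * ‖x - y‖ ^ κ := by ring
  calc _ ≤ ‖adjoint (D2 y - D2 x) (g1 u)‖ + ‖adjoint (D2 x) (g1 u - g1 (h2 x))‖ +
        ‖(M * ℓ * ‖x - y‖ ^ (κ - 1)) • (x - y)‖ := hsplit ▸ norm_add₃_le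
    _ ≤ M * ℓ * ‖x - y‖ ^ κ + G * L * ℓ * D / (κ + 1) * ‖x - y‖ ^ κ + M * ℓ * ‖x - y‖ ^ κ := by
        rw [norm_rpow_sub_one_smul_self hκ.ne' (by positivity)]
        gcongr
    _ = (2 * M * ℓ + G * L * ℓ * D / (κ + 1)) * ‖x - y‖ ^ κ := by ring

end InnerProduct

theorem composite_surrogate_general {n d : ℕ}
    (h1 : EuclideanSpace ℝ (Fin d) → ℝ)
    (h2 : EuclideanSpace ℝ (Fin n) → EuclideanSpace ℝ (Fin d))
    (g1 : EuclideanSpace ℝ (Fin d) → EuclideanSpace ℝ (Fin d))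
    (D2 : EuclideanSpace ℝ (Fin n) → (EuclideanSpace ℝ (Fin n) →L[ℝ] EuclideanSpace ℝ (Fin d)))
    (hconv1 : ConvexOn ℝ univ h1)
    (hg1 : ∀ u, HasGradientAt h1 (g1 u) u)
    (hD2 : ∀ x, HasFDerivAt h2 (D2 x) x)
    (L M ℓ κ : ℝ) (hL : 0 < L) (hℓ : 0 < ℓ) (hκ0 : 0 < κ)
    (hg1lip : ∀ u v, ‖g1 u - g1 v‖ ≤ L * ‖u - v‖)
    (hg1bnd : ∀ u, ‖g1 u‖ ≤ M)
    (hD2holder : ∀ x y, ‖D2 x - D2 y‖ ≤ ℓ * ‖x - y‖ ^ κ) :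
    -- (a) convexity of the surrogate
    (∀ y, ConvexOn ℝ univ
      (fun x => h1 (h2 y + D2 y (x - y)) + (M * ℓ / (κ + 1)) * ‖x - y‖ ^ (κ + 1))) ∧
    -- (b) majorization with equality at the base point
    (∀ y x, h1 (h2 x) ≤
      h1 (h2 y + D2 y (x - y)) + (M * ℓ / (κ + 1)) * ‖x - y‖ ^ (κ + 1)) ∧
    (∀ y, h1 (h2 y + D2 y (y - y)) + (M * ℓ / (κ + 1)) * ‖y - y‖ ^ (κ + 1) = h1 (h2 y)) ∧
    -- the gradients of `h` and of the surrogate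
    (∀ x, HasGradientAt (fun z => h1 (h2 z))
      (ContinuousLinearMap.adjoint (D2 x) (g1 (h2 x))) x) ∧
    (∀ y x, HasGradientAt
      (fun z => h1 (h2 y + D2 y (z - y)) + (M * ℓ / (κ + 1)) * ‖z - y‖ ^ (κ + 1))
      (ContinuousLinearMap.adjoint (D2 y) (g1 (h2 y + D2 y (x - y))) +
        (M * ℓ * ‖x - y‖ ^ (κ - 1)) • (x - y)) x) ∧
    -- (c) the gradient error bound on convex compact sets
    (∀ (K : Set (EuclideanSpace ℝ (Fin n))) (D G : ℝ),
      Convex ℝ K → IsCompact K → Metric.diam K ≤ D → (∀ x ∈ K, ‖D2 x‖ ≤ G) →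
      ∀ x ∈ K, ∀ y ∈ K,
        ‖(ContinuousLinearMap.adjoint (D2 y) (g1 (h2 y + D2 y (x - y))) +
            (M * ℓ * ‖x - y‖ ^ (κ - 1)) • (x - y)) -
          ContinuousLinearMap.adjoint (D2 x) (g1 (h2 x))‖ ≤
        (2 * M * ℓ + G * L * ℓ * D / (κ + 1)) * ‖x - y‖ ^ κ) := by
  have hM : 0 ≤ M := (norm_nonneg _).trans (hg1bnd 0)
  have hκ1 : κ + 1 ≠ 0 := by linarith
  refine ⟨fun y => ?_, comp_le_comp_linearization_add_rpow hg1 hg1bnd hD2 hκ0.le hD2holder,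
    fun y => by simp [Real.zero_rpow hκ1], fun x => (hg1 (h2 x)).comp_hasFDerivAt (hD2 x),
    fun y x => ?_, ?_⟩
  · have hpow := (convexOn_norm_sub_rpow y (by linarith : 1 ≤ κ + 1)).smul
      (by positivity : 0 ≤ M * ℓ / (κ + 1))
    exact (hconv1.comp_const_add_clm_sub (D2 y) (h2 y) y).add hpow
  · have hlin : HasFDerivAt (fun z => h2 y + D2 y (z - y)) (D2 y) x := by
      simpa using ((D2 y).hasFDerivAt.comp x ((hasFDerivAt_id x).sub_const y)).const_add (h2 y)
    convert ((hg1 _).comp_hasFDerivAt hlin).add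
      ((hasGradientAt_norm_sub_rpow y x (by linarith : 1 < κ + 1)).const_mul (M * ℓ / (κ + 1)))
      using 2
    rw [smul_smul, show κ + 1 - 2 = κ - 1 by ring]
    field_simp
  · intro K D G _ hK hdiam hG x hx y hy
    refine norm_gradient_linearization_sub_gradient_le hD2 hL.le hℓ.le hκ0 hg1lip hg1bnd
      hD2holder (hG x hx) ?_
    rw [← dist_eq_norm]
    exact (Metric.dist_le_diam_of_mem hK.isBounded hx hy).trans hdiam

/-- (Proposition 4 in the paper: nested composite surrogates.) For
`h(x) = h¹(h²(x))` with `h¹` convex, `∇h¹` `L`-Lipschitz and bounded by `M`, and the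
Jacobian `Dh²` `(ℓ,κ)`-Hölder continuous, the surrogate
`h̃(x|y) = h¹(h²(y) + Dh²(y)(x−y)) + (Mℓ/(κ+1))‖x−y‖^{κ+1}` is a convex majorant of
`h`, exact at `y`, and on every convex compact set `K` of diameter `≤ D` on which
`‖Dh²‖ ≤ G`, its gradient differs from `∇h` by at most
`(2Mℓ + GLℓD/(κ+1))‖x−y‖^κ`.  Here `∇h(x) = (Dh²(x))^*(∇h¹(h²(x)))` and
`∇h̃(x|y) = (Dh²(y))^*(∇h¹(h²(y) + Dh²(y)(x−y))) + Mℓ‖x−y‖^{κ−1}(x−y)`. -/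
theorem composite_surrogate {n d : ℕ}
    (h1 : EuclideanSpace ℝ (Fin d) → ℝ)
    (h2 : EuclideanSpace ℝ (Fin n) → EuclideanSpace ℝ (Fin d))
    (g1 : EuclideanSpace ℝ (Fin d) → EuclideanSpace ℝ (Fin d))
    (D2 : EuclideanSpace ℝ (Fin n) → (EuclideanSpace ℝ (Fin n) →L[ℝ] EuclideanSpace ℝ (Fin d)))
    (hconv1 : ConvexOn ℝ univ h1)
    (hg1 : ∀ u, HasGradientAt h1 (g1 u) u)
    (hD2 : ∀ x, HasFDerivAt h2 (D2 x) x)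
    (L M ℓ κ : ℝ) (hL : 0 < L) (hM : 0 < M) (hℓ : 0 < ℓ) (hκ0 : 0 < κ) (hκ1 : κ ≤ 1)
    (hg1lip : ∀ u v, ‖g1 u - g1 v‖ ≤ L * ‖u - v‖)
    (hg1bnd : ∀ u, ‖g1 u‖ ≤ M)
    (hD2holder : ∀ x y, ‖D2 x - D2 y‖ ≤ ℓ * ‖x - y‖ ^ κ) :
    -- (a) convexity of the surrogate
    (∀ y, ConvexOn ℝ univ
      (fun x => h1 (h2 y + D2 y (x - y)) + (M * ℓ / (κ + 1)) * ‖x - y‖ ^ (κ + 1))) ∧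
    -- (b) majorization with equality at the base point
    (∀ y x, h1 (h2 x) ≤
      h1 (h2 y + D2 y (x - y)) + (M * ℓ / (κ + 1)) * ‖x - y‖ ^ (κ + 1)) ∧
    (∀ y, h1 (h2 y + D2 y (y - y)) + (M * ℓ / (κ + 1)) * ‖y - y‖ ^ (κ + 1) = h1 (h2 y)) ∧
    -- the gradients of `h` and of the surrogate
    (∀ x, HasGradientAt (fun z => h1 (h2 z))
      (ContinuousLinearMap.adjoint (D2 x) (g1 (h2 x))) x) ∧
    (∀ y x, HasGradientAt
      (fun z => h1 (h2 y + D2 y (z - y)) + (M * ℓ / (κ + 1)) * ‖z - y‖ ^ (κ + 1))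
      (ContinuousLinearMap.adjoint (D2 y) (g1 (h2 y + D2 y (x - y))) +
        (M * ℓ * ‖x - y‖ ^ (κ - 1)) • (x - y)) x) ∧
    -- (c) the gradient error bound on convex compact sets
    (∀ (K : Set (EuclideanSpace ℝ (Fin n))) (D G : ℝ),
      Convex ℝ K → IsCompact K → Metric.diam K ≤ D → (∀ x ∈ K, ‖D2 x‖ ≤ G) →
      ∀ x ∈ K, ∀ y ∈ K,
        ‖(ContinuousLinearMap.adjoint (D2 y) (g1 (h2 y + D2 y (x - y))) +
            (M * ℓ * ‖x - y‖ ^ (κ - 1)) • (x - y)) -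
          ContinuousLinearMap.adjoint (D2 x) (g1 (h2 x))‖ ≤
        (2 * M * ℓ + G * L * ℓ * D / (κ + 1)) * ‖x - y‖ ^ κ) :=
  composite_surrogate_general h1 h2 g1 D2 hconv1 hg1 hD2 L M ℓ κ hL hℓ hκ0 hg1lip hg1bnd hD2holder
end

section
/- Let n ≥ 3 and let Q₁, Q₂ be real symmetric n×n matrices. Then the set S(Q₁,Q₂) := {(xᵀQ₁x, xᵀQ₂x) : x ∈ ℝⁿ, ‖x‖ = 1} equals the set {(Tr(Q₁X), Tr(Q₂X)) : X real symmetric n×n, X positive semidefinite, Tr(X) = 1}. -/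
/-!
Brickman's theorem: for `n ≥ 3` the joint numerical range `{(zᵀQ₁z, zᵀQ₂z) : ‖z‖ = 1}` is
convex. For two of its points `P ≠ Q`, the unit vectors mapped onto the line `PQ` form a quadric
`{‖z‖ = 1, zᵀCz = 0}` with `C` symmetric. In an eigenbasis of `C` this quadric is covered by the
images of the convex polytope `{x ∈ Δ : ∑ λᵢ xᵢ = 0}` under the signed square roots
`x ↦ (σᵢ √xᵢ)ᵢ`, and when `n ≥ 3` two points of the polytope with small supports connect any two
sign patterns, so the quadric is path-connected up to `z ↦ -z`. A path in it from a preimage of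
`P` to one of `Q` therefore sweeps out the whole segment `[P, Q]`.

Writing a positive semidefinite `X` of trace one as `BᵀB` exhibits `(Tr Q₁X, Tr Q₂X)` as the convex
combination of points of the joint numerical range given by the normalized rows of `B`, with
weights their squared norms; conversely `X = xxᵀ` realizes the point of a unit vector `x`.
-/

open Matrix

def JoinedUpToNeg {E : Type*} [TopologicalSpace E] [Neg E] (K : Set E) : Prop :=
  ∀ a ∈ K, ∀ b ∈ K, JoinedIn K a b ∨ JoinedIn K a (-b)

lemma JoinedUpToNeg.image {E F : Type*} [TopologicalSpace E] [Neg E] [TopologicalSpace F] [Neg F] {K : Set E} (hK : JoinedUpToNeg K) {f : E → F} (hf : Continuous f)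
    (hf_neg : ∀ x, f (-x) = -f x) : JoinedUpToNeg (f '' K) := by
  rintro _ ⟨a, ha, rfl⟩ _ ⟨b, hb, rfl⟩
  rcases hK a ha b hb with h | h
  · exact .inl (h.map hf)
  · exact .inr (hf_neg b ▸ h.map hf)

section SignedSqrt

variable {ι : Type*}

noncomputable def signedSqrt (σ x : ι → ℝ) : ι → ℝ := fun i => σ i * √(x i)

lemma continuous_signedSqrt (σ : ι → ℝ) : Continuous (signedSqrt σ) := by
  unfold signedSqrt; fun_prop

lemma signedSqrt_sq {σ x : ι → ℝ} (hσ : ∀ i, σ i ^ 2 = 1) (hx : ∀ i, 0 ≤ x i) :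
    (fun i => signedSqrt σ x i ^ 2) = x :=
  funext fun i => by rw [signedSqrt, mul_pow, hσ, one_mul, Real.sq_sqrt (hx i)]

lemma signedSqrt_congr {σ ρ x : ι → ℝ} (h : ∀ i, x i ≠ 0 → σ i = ρ i) :
    signedSqrt σ x = signedSqrt ρ x :=
  funext fun i => by by_cases hx : x i = 0 <;> simp [signedSqrt, hx, h]

lemma exists_signs_signedSqrt_eq [DecidableEq ι] (z : ι → ℝ) (i₀ : ι) {ε : ℝ} (hε : ε ^ 2 = 1)
    (hz : 0 ≤ ε * z i₀) :
    ∃ σ : ι → ℝ, (∀ i, σ i ^ 2 = 1) ∧ σ i₀ = ε ∧ signedSqrt σ (fun i => z i ^ 2) = z := by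
  refine ⟨Function.update (fun i => if z i < 0 then -1 else 1) i₀ ε, fun i => ?_, by simp,
    funext fun i => ?_⟩
  · rcases eq_or_ne i i₀ with rfl | hi
    · simpa using hε
    · simp only [Function.update_of_ne hi]; split_ifs <;> norm_num
  · simp only [signedSqrt, Real.sqrt_sq_eq_abs]
    rcases eq_or_ne i i₀ with rfl | hi
    · rw [Function.update_self]
      rcases sq_eq_one_iff.1 hε with rfl | rfl
      · rw [abs_of_nonneg (by linarith), one_mul]
      · rw [abs_of_nonpos (by linarith)]; ring
    · simp only [Function.update_of_ne hi]
      split_ifs with h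
      · rw [abs_of_neg h]; ring
      · rw [abs_of_nonneg (not_lt.1 h), one_mul]

end SignedSqrt

namespace Matrix

variable {ι : Type*} [Fintype ι]

def quadricSphere (C : Matrix ι ι ℝ) : Set (ι → ℝ) :=
  {z | z ⬝ᵥ z = 1 ∧ z ⬝ᵥ C *ᵥ z = 0}

lemma neg_mem_quadricSphere {C : Matrix ι ι ℝ} {z : ι → ℝ} (hz : z ∈ quadricSphere C) :
    -z ∈ quadricSphere C := by
  simpa [quadricSphere, mulVec_neg] using hz

lemma mulVec_dotProduct_mulVec_mulVec (U C : Matrix ι ι ℝ) (w : ι → ℝ) :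
    U *ᵥ w ⬝ᵥ C *ᵥ (U *ᵥ w) = w ⬝ᵥ (Uᵀ * C * U) *ᵥ w := by
  rw [mulVec_mulVec, dotProduct_mulVec, ← vecMul_transpose U w, vecMul_vecMul,
    ← dotProduct_mulVec, mul_assoc]

variable [DecidableEq ι]

lemma mulVec_mem_quadricSphere_iff {U : Matrix ι ι ℝ} (hU : Uᵀ * U = 1) (C : Matrix ι ι ℝ)
    (w : ι → ℝ) : U *ᵥ w ∈ quadricSphere C ↔ w ∈ quadricSphere (Uᵀ * C * U) := by
  have h := mulVec_dotProduct_mulVec_mulVec U 1 w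
  rw [mul_one, hU, one_mulVec, one_mulVec] at h
  simp only [quadricSphere, Set.mem_ofPred_eq, h, mulVec_dotProduct_mulVec_mulVec]

lemma quadricSphere_eq_image_mulVec (C : Matrix ι ι ℝ) {U : Matrix ι ι ℝ}
    (hU : U ∈ orthogonalGroup ι ℝ) :
    quadricSphere C = (U *ᵥ ·) '' quadricSphere (Uᵀ * C * U) := by
  have hUU : Uᵀ * U = 1 := by
    simpa [star_eq_conjTranspose] using (mem_orthogonalGroup_iff' ι ℝ).1 hU
  have hUU' : U * Uᵀ = 1 := by
    simpa [star_eq_conjTranspose] using (mem_orthogonalGroup_iff ι ℝ).1 hU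
  ext z
  refine ⟨fun hz => ⟨Uᵀ *ᵥ z, ?_, by simp [mulVec_mulVec, hUU']⟩, ?_⟩
  · rwa [← mulVec_mem_quadricSphere_iff hUU, mulVec_mulVec, hUU', one_mulVec]
  · rintro ⟨w, hw, rfl⟩
    rwa [mulVec_mem_quadricSphere_iff hUU]

end Matrix

section Diagonal

variable {ι : Type*} [Fintype ι]

def simplexSlice (lam : ι → ℝ) : Set (ι → ℝ) :=
  stdSimplex ℝ ι ∩ {x | lam ⬝ᵥ x = 0}

lemma convex_simplexSlice (lam : ι → ℝ) : Convex ℝ (simplexSlice lam) :=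
  (convex_stdSimplex ℝ ι).inter <| convex_hyperplane
    ⟨fun x y => dotProduct_add lam x y, fun c x => dotProduct_smul c lam x⟩ 0

lemma mem_quadricSphere_diagonal_iff [DecidableEq ι] {lam z : ι → ℝ} :
    z ∈ quadricSphere (diagonal lam) ↔ (fun i => z i ^ 2) ∈ simplexSlice lam := by
  simp [quadricSphere, simplexSlice, stdSimplex, dotProduct, mulVec_diagonal, sq, mul_self_nonneg,
    mul_left_comm]

lemma exists_nonpos_of_mem_simplexSlice {lam x : ι → ℝ} (hx : x ∈ simplexSlice lam) :
    ∃ i, lam i ≤ 0 := by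
  by_contra! hpos
  obtain ⟨⟨hx0, hx1⟩, hlam⟩ := hx
  have hterm := (Finset.sum_eq_zero_iff_of_nonneg fun i _ => mul_nonneg (hpos i).le (hx0 i)).1 hlam
  have hzero : ∀ i ∈ Finset.univ, x i = 0 := fun i hi =>
    (mul_eq_zero.1 (hterm i hi)).resolve_left (hpos i).ne'
  simp [Finset.sum_eq_zero hzero] at hx1

variable [DecidableEq ι] {lam : ι → ℝ}

lemma signedSqrt_mem_quadricSphere {σ x : ι → ℝ} (hσ : ∀ i, σ i ^ 2 = 1)
    (hx : x ∈ simplexSlice lam) : signedSqrt σ x ∈ quadricSphere (diagonal lam) := by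
  rwa [mem_quadricSphere_diagonal_iff, signedSqrt_sq hσ hx.1.1]

lemma joinedIn_signedSqrt {σ ρ w x y : ι → ℝ} (hσ : ∀ i, σ i ^ 2 = 1) (hρ : ∀ i, ρ i ^ 2 = 1)
    (hw : w ∈ simplexSlice lam) (hσρ : ∀ i, w i ≠ 0 → σ i = ρ i)
    (hx : x ∈ simplexSlice lam) (hy : y ∈ simplexSlice lam) :
    JoinedIn (quadricSphere (diagonal lam)) (signedSqrt σ x) (signedSqrt ρ y) := by
  have joined (τ : ι → ℝ) (hτ : ∀ i, τ i ^ 2 = 1) {a b} (ha : a ∈ simplexSlice lam)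
      (hb : b ∈ simplexSlice lam) :
      JoinedIn (quadricSphere (diagonal lam)) (signedSqrt τ a) (signedSqrt τ b) :=
    (((convex_simplexSlice lam).isPathConnected ⟨a, ha⟩).image
      (continuous_signedSqrt τ)).joinedIn _ ⟨a, ha, rfl⟩ _ ⟨b, hb, rfl⟩ |>.mono <|
        Set.image_subset_iff.2 fun _ => signedSqrt_mem_quadricSphere hτ
  exact (joined σ hσ hx hw).trans (signedSqrt_congr hσρ ▸ joined ρ hρ hw hy)

lemma exists_mem_simplexSlice_support_subset {p q : ι} (hp : lam p < 0) (hq : 0 < lam q) :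
    ∃ v ∈ simplexSlice lam, ∀ i, v i ≠ 0 → i = p ∨ i = q := by
  have hd : 0 < lam q - lam p := by linarith
  refine ⟨(lam q / (lam q - lam p)) • Pi.single p 1 + (-lam p / (lam q - lam p)) • Pi.single q 1,
    ⟨convex_stdSimplex ℝ ι (single_mem_stdSimplex ℝ p) (single_mem_stdSimplex ℝ q)
      (div_nonneg hq.le hd.le) (div_nonneg (by linarith) hd.le) (by field_simp; ring), ?_⟩,
    fun i hi => ?_⟩
  · simp only [Set.mem_ofPred_eq, dotProduct_add, dotProduct_smul, dotProduct_single, smul_eq_mul]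
    field_simp
    ring
  · by_contra! h
    simp [h.1, h.2] at hi

lemma exists_vertex_pair (hι : 3 ≤ Fintype.card ι) (hne : (simplexSlice lam).Nonempty) :
    ∃ p q, ∃ v ∈ simplexSlice lam, ∃ v' ∈ simplexSlice lam,
      (∀ i, v i ≠ 0 → i = p ∨ i = q) ∧ v' q = 0 := by
  by_cases hzero : ∃ r, lam r = 0
  · obtain ⟨r, hr⟩ := hzero
    obtain ⟨q, hq⟩ := Fintype.exists_ne_of_one_lt_card (by omega) r
    have hv : Pi.single r 1 ∈ simplexSlice lam := ⟨single_mem_stdSimplex ℝ r, by simp [hr]⟩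
    exact ⟨r, q, _, hv, _, hv, fun i hi => .inl (by by_contra h; simp [h] at hi), by simp [hq]⟩
  push Not at hzero
  obtain ⟨x, hx⟩ := hne
  obtain ⟨p, hp⟩ := exists_nonpos_of_mem_simplexSlice hx
  obtain ⟨q, hq⟩ := exists_nonpos_of_mem_simplexSlice (lam := -lam) (x := x)
    ⟨hx.1, by simpa [neg_dotProduct] using hx.2⟩
  replace hp : lam p < 0 := (hp.lt_of_ne (hzero p))
  replace hq : 0 < lam q := by simpa using (hq.lt_of_ne (by simpa using hzero q))
  have hpq : p ≠ q := by rintro rfl; linarith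
  obtain ⟨r, -, hr⟩ := Finset.exists_mem_notMem_of_card_lt_card (s := {p, q})
    (t := Finset.univ) (by rw [Finset.card_univ]; exact (Finset.card_le_two).trans_lt (by omega))
  simp only [Finset.mem_insert, Finset.mem_singleton, not_or] at hr
  obtain ⟨v, hv, hvpq⟩ := exists_mem_simplexSlice_support_subset hp hq
  rcases (hzero r).lt_or_gt with hr' | hr'
  · obtain ⟨v', hv', hv'rq⟩ := exists_mem_simplexSlice_support_subset hr' hq
    refine ⟨q, p, v, hv, v', hv', fun i hi => (hvpq i hi).symm, ?_⟩
    by_contra h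
    rcases hv'rq p h with h | h
    exacts [hr.1 h.symm, hpq h]
  · obtain ⟨v', hv', hv'pr⟩ := exists_mem_simplexSlice_support_subset hp hr'
    refine ⟨p, q, v, hv, v', hv', hvpq, ?_⟩
    by_contra h
    rcases hv'pr q h with h | h
    exacts [hpq h.symm, hr.2 h.symm]

lemma joinedUpToNeg_quadricSphere_diagonal (hι : 3 ≤ Fintype.card ι) (lam : ι → ℝ) :
    JoinedUpToNeg (quadricSphere (diagonal lam)) := by
  intro a ha b hb
  obtain ⟨p, q, v, hv, v', hv', hvpq, hv'q⟩ :=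
    exists_vertex_pair hι ⟨_, mem_quadricSphere_diagonal_iff.1 ha⟩
  obtain ⟨ε, hε, hεa⟩ : ∃ ε : ℝ, ε ^ 2 = 1 ∧ 0 ≤ ε * a p := by
    rcases le_total 0 (a p) with h | h
    exacts [⟨1, by norm_num, by linarith⟩, ⟨-1, by norm_num, by linarith⟩]
  obtain ⟨σ, hσ, hσp, haσ⟩ := exists_signs_signedSqrt_eq a p hε hεa
  suffices key : ∀ b ∈ quadricSphere (diagonal lam), 0 ≤ ε * b p →
      JoinedIn (quadricSphere (diagonal lam)) a b by
    rcases le_total 0 (ε * b p) with h | h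
    · exact .inl (key b hb h)
    · exact .inr (key (-b) (neg_mem_quadricSphere hb) (by simpa using h))
  intro b hb hεb
  obtain ⟨τ, hτ, hτp, hbτ⟩ := exists_signs_signedSqrt_eq b p hε hεb
  -- `ρ` agrees with `σ` off `q` and with `τ` on `{p, q}`, so it bridges the two sign patterns.
  set ρ := Function.update σ q (τ q)
  have hρ : ∀ i, ρ i ^ 2 = 1 := fun i => by
    rcases eq_or_ne i q with rfl | hi
    · simpa [ρ] using hτ i
    · simpa [ρ, hi] using hσ i
  rw [← haσ, ← hbτ]
  refine (joinedIn_signedSqrt hσ hρ hv' (fun i hi => ?_) (mem_quadricSphere_diagonal_iff.1 ha)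
    hv).trans (joinedIn_signedSqrt hρ hτ hv (fun i hi => ?_) hv
    (mem_quadricSphere_diagonal_iff.1 hb))
  · simp [ρ, show i ≠ q by rintro rfl; exact hi hv'q]
  · rcases eq_or_ne i q with rfl | hiq
    · simp [ρ]
    · rcases hvpq i hi with rfl | rfl
      · simp [ρ, hiq, hσp, hτp]
      · exact absurd rfl hiq

end Diagonal

namespace Matrix

variable {ι : Type*} [Fintype ι]

lemma joinedUpToNeg_quadricSphere (hι : 3 ≤ Fintype.card ι) {C : Matrix ι ι ℝ} (hC : C.IsSymm) :
    JoinedUpToNeg (quadricSphere C) := by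
  classical
  have hH : C.IsHermitian := isHermitian_iff_isSymm.2 hC
  set U : Matrix ι ι ℝ := ↑hH.eigenvectorUnitary
  have hdiag : Uᵀ * C * U = diagonal hH.eigenvalues := by
    simpa [Unitary.conjStarAlgAut_apply, star_eq_conjTranspose] using
      hH.conjStarAlgAut_star_eigenvectorUnitary
  rw [quadricSphere_eq_image_mulVec C (SetLike.coe_mem hH.eigenvectorUnitary), hdiag]
  exact (joinedUpToNeg_quadricSphere_diagonal hι _).image
    (mulVecLin U).continuous_of_finiteDimensional fun x => mulVec_neg x U

end Matrix

def cross (u v : ℝ × ℝ) : ℝ := u.1 * v.2 - u.2 * v.1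

lemma eq_smul_of_cross_eq_zero {u δ : ℝ × ℝ} {θ : ℝ} (hδ : δ ≠ 0) (hcross : cross u δ = 0)
    (hdot : u.1 * δ.1 + u.2 * δ.2 = θ * (δ.1 ^ 2 + δ.2 ^ 2)) : u = θ • δ := by
  have hN : δ.1 ^ 2 + δ.2 ^ 2 ≠ 0 := by
    contrapose! hδ
    ext <;> simp <;> nlinarith [sq_nonneg δ.1, sq_nonneg δ.2]
  unfold cross at hcross
  ext
  · exact mul_left_cancel₀ hN <| by
      rw [Prod.smul_fst, smul_eq_mul]; linear_combination δ.1 * hdot + δ.2 * hcross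
  · exact mul_left_cancel₀ hN <| by
      rw [Prod.smul_snd, smul_eq_mul]; linear_combination δ.2 * hdot - δ.1 * hcross

lemma segment_subset_range_of_cross_eq_zero {T : Type*} [TopologicalSpace T] {x y : T}
    (γ : Path x y) {f : T → ℝ × ℝ} (hf : Continuous f)
    (hγ : ∀ t, cross (f (γ t) - f x) (f y - f x) = 0) :
    segment ℝ (f x) (f y) ⊆ Set.range (f ∘ γ) := by
  rw [segment_eq_image_lineMap]
  rintro _ ⟨θ, ⟨hθ0, hθ1⟩, rfl⟩
  set δ := f y - f x
  by_cases hδ : δ = 0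
  · exact ⟨0, by simp [(sub_eq_zero.1 hδ).symm]⟩
  set g : unitInterval → ℝ := fun t => (f (γ t) - f x).1 * δ.1 + (f (γ t) - f x).2 * δ.2
  have hg : Continuous g := by
    have := hf.comp γ.continuous
    fun_prop
  have hN : 0 ≤ δ.1 ^ 2 + δ.2 ^ 2 := by positivity
  obtain ⟨t, ht⟩ := intermediate_value_univ 0 1 hg
    (show θ * (δ.1 ^ 2 + δ.2 ^ 2) ∈ Set.Icc (g 0) (g 1) by
      simp only [g, Path.source, Path.target, sub_self, Prod.fst_zero, Prod.snd_zero, zero_mul,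
        add_zero]
      constructor <;> nlinarith)
  refine ⟨t, ?_⟩
  rw [AffineMap.lineMap_apply, vsub_eq_sub, vadd_eq_add, Function.comp_apply,
    ← sub_eq_iff_eq_add]
  exact eq_smul_of_cross_eq_zero hδ (hγ t) ht

namespace Matrix

lemma trace_mul_transpose_mul_self {m n R : Type*} [Fintype m] [Fintype n] [CommSemiring R]
    (Q : Matrix n n R) (B : Matrix m n R) : (Q * (Bᵀ * B)).trace = ∑ k, B k ⬝ᵥ Q *ᵥ B k := by
  rw [← Matrix.mul_assoc, trace_mul_comm, trace]
  simp only [diag_apply, mul_apply, transpose_apply, dotProduct, mulVec, Finset.mul_sum]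

open scoped MatrixOrder in
lemma PosSemidef.exists_eq_transpose_mul_self {n : Type*} [Fintype n] {X : Matrix n n ℝ}
    (hX : X.PosSemidef) : ∃ B : Matrix n n ℝ, X = Bᵀ * B := by
  classical
  obtain ⟨B, rfl⟩ := CStarAlgebra.nonneg_iff_eq_star_mul_self.mp hX.nonneg
  exact ⟨B, by rw [star_eq_conjTranspose, conjTranspose_eq_transpose_of_trivial]⟩

variable {ι : Type*} [Fintype ι]

def quadPair (Q₁ Q₂ : Matrix ι ι ℝ) (z : ι → ℝ) : ℝ × ℝ :=
  (z ⬝ᵥ Q₁ *ᵥ z, z ⬝ᵥ Q₂ *ᵥ z)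

def jointNumericalRange (Q₁ Q₂ : Matrix ι ι ℝ) : Set (ℝ × ℝ) :=
  quadPair Q₁ Q₂ '' {z | z ⬝ᵥ z = 1}

section

variable (Q₁ Q₂ : Matrix ι ι ℝ)

lemma continuous_quadPair : Continuous (quadPair Q₁ Q₂) := by
  unfold quadPair; fun_prop

lemma quadPair_smul (c : ℝ) (z : ι → ℝ) : quadPair Q₁ Q₂ (c • z) = (c * c) • quadPair Q₁ Q₂ z := by
  simp only [quadPair, mulVec_smul, dotProduct_smul, smul_dotProduct, smul_eq_mul, Prod.smul_mk]
  ring_nf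

lemma quadPair_neg (z : ι → ℝ) : quadPair Q₁ Q₂ (-z) = quadPair Q₁ Q₂ z := by
  simpa using quadPair_smul Q₁ Q₂ (-1) z

lemma cross_quadPair_sub [DecidableEq ι] {z : ι → ℝ} (hz : z ⬝ᵥ z = 1) (p δ : ℝ × ℝ) :
    cross (quadPair Q₁ Q₂ z - p) δ = z ⬝ᵥ (δ.2 • (Q₁ - p.1 • 1) - δ.1 • (Q₂ - p.2 • 1)) *ᵥ z := by
  simp only [cross, quadPair, sub_mulVec, smul_mulVec, one_mulVec, dotProduct_sub,
    dotProduct_smul, hz, Prod.fst_sub, Prod.snd_sub, smul_eq_mul]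
  ring

end

theorem convex_jointNumericalRange (hι : 3 ≤ Fintype.card ι) {Q₁ Q₂ : Matrix ι ι ℝ}
    (hQ₁ : Q₁.IsSymm) (hQ₂ : Q₂.IsSymm) : Convex ℝ (jointNumericalRange Q₁ Q₂) := by
  classical
  refine convex_iff_segment_subset.2 ?_
  rintro _ ⟨x, hx, rfl⟩ _ ⟨y, hy, rfl⟩
  set F := quadPair Q₁ Q₂
  set δ := F y - F x
  set C := δ.2 • (Q₁ - (F x).1 • 1) - δ.1 • (Q₂ - (F x).2 • 1)
  have hC : C.IsSymm :=
    ((hQ₁.sub (isSymm_one.smul _)).smul _).sub ((hQ₂.sub (isSymm_one.smul _)).smul _)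
  have hK {z} (hz : z ⬝ᵥ z = 1) : z ∈ quadricSphere C ↔ cross (F z - F x) δ = 0 := by
    rw [cross_quadPair_sub _ _ hz]
    exact and_iff_right hz
  have hxK : x ∈ quadricSphere C := (hK hx).2 (by simp [cross])
  have hyK : y ∈ quadricSphere C := (hK hy).2 (by simp [cross, δ]; ring)
  obtain ⟨y', hFy', γ, hγ⟩ : ∃ y', F y' = F y ∧ JoinedIn (quadricSphere C) x y' := by
    rcases joinedUpToNeg_quadricSphere hι hC x hxK y hyK with h | h
    exacts [⟨y, rfl, h⟩, ⟨-y, quadPair_neg Q₁ Q₂ y, h⟩]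
  rw [← hFy']
  refine (segment_subset_range_of_cross_eq_zero (f := F) γ (continuous_quadPair Q₁ Q₂)
    fun t => ?_).trans ?_
  · rw [hFy']
    exact (hK (hγ t).1).1 (hγ t)
  · rintro _ ⟨t, rfl⟩
    exact ⟨γ t, (hγ t).1, rfl⟩

variable [Nonempty ι]

lemma exists_quadPair_eq_smul (Q₁ Q₂ : Matrix ι ι ℝ) (z : ι → ℝ) :
    ∃ u, u ⬝ᵥ u = 1 ∧ quadPair Q₁ Q₂ z = (z ⬝ᵥ z) • quadPair Q₁ Q₂ u := by
  classical
  by_cases hz : z = 0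
  · obtain ⟨i⟩ := ‹Nonempty ι›
    exact ⟨Pi.single i 1, by simp, by simp [hz, quadPair]⟩
  have hpos : 0 < z ⬝ᵥ z :=
    (Finset.sum_nonneg fun i _ => mul_self_nonneg (z i)).lt_of_ne
      (Ne.symm (dotProduct_self_eq_zero.not.2 hz))
  have hs : (√(z ⬝ᵥ z))⁻¹ * (√(z ⬝ᵥ z))⁻¹ * (z ⬝ᵥ z) = 1 := by
    rw [← mul_inv, Real.mul_self_sqrt hpos.le, inv_mul_cancel₀ hpos.ne']
  refine ⟨(√(z ⬝ᵥ z))⁻¹ • z, ?_, ?_⟩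
  · rwa [dotProduct_smul, smul_dotProduct, smul_smul, smul_eq_mul]
  · rw [quadPair_smul, smul_smul, mul_comm, hs, one_smul]

lemma trace_mul_mem_jointNumericalRange {Q₁ Q₂ : Matrix ι ι ℝ} (hS : Convex ℝ (jointNumericalRange Q₁ Q₂))
    {m : Type*} [Fintype m] (B : Matrix m ι ℝ) (hB : (Bᵀ * B).trace = 1) :
    ((Q₁ * (Bᵀ * B)).trace, (Q₂ * (Bᵀ * B)).trace) ∈ jointNumericalRange Q₁ Q₂ := by
  classical
  choose u hu hBu using fun k => exists_quadPair_eq_smul Q₁ Q₂ (B k)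
  have hsum : ∑ k, B k ⬝ᵥ B k = 1 := by
    simpa only [one_mul, one_mulVec, hB] using (trace_mul_transpose_mul_self 1 B).symm
  have hpt : ((Q₁ * (Bᵀ * B)).trace, (Q₂ * (Bᵀ * B)).trace) = ∑ k, quadPair Q₁ Q₂ (B k) := by
    ext <;> simp [trace_mul_transpose_mul_self, quadPair, Prod.fst_sum, Prod.snd_sum]
  rw [hpt]
  simp_rw [hBu]
  exact hS.sum_mem (fun k _ => Finset.sum_nonneg fun i _ => mul_self_nonneg (B k i)) hsum
    fun k _ => ⟨u k, hu k, rfl⟩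

end Matrix

lemma EuclideanSpace.norm_eq_one_iff_dotProduct {ι : Type*} [Fintype ι] (x : EuclideanSpace ℝ ι) :
    ‖x‖ = 1 ↔ x.ofLp ⬝ᵥ x.ofLp = 1 := by
  rw [← pow_eq_one_iff_of_nonneg (norm_nonneg x) two_ne_zero, EuclideanSpace.real_norm_sq_eq]
  simp only [dotProduct, sq]

/-- (LMI representation of the Brickman set.)  For `n ≥ 3` and real
symmetric `Q₁, Q₂`, the set `S(Q₁,Q₂) = {(xᵀQ₁x, xᵀQ₂x) : ‖x‖ = 1}` coincides with
`{(Tr(Q₁X), Tr(Q₂X)) : X ⪰ 0, Tr X = 1}`. -/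
theorem brickman_lmi {n : ℕ} (hn : 3 ≤ n)
    (Q₁ Q₂ : Matrix (Fin n) (Fin n) ℝ) (hQ₁ : Q₁.IsSymm) (hQ₂ : Q₂.IsSymm) :
    {p : ℝ × ℝ | ∃ x : EuclideanSpace ℝ (Fin n), ‖x‖ = 1 ∧
        p = (x ⬝ᵥ Q₁.mulVec x, x ⬝ᵥ Q₂.mulVec x)} =
      {p : ℝ × ℝ | ∃ X : Matrix (Fin n) (Fin n) ℝ, X.IsSymm ∧ X.PosSemidef ∧
        X.trace = 1 ∧ p = ((Q₁ * X).trace, (Q₂ * X).trace)} := by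
  have hS := convex_jointNumericalRange (by simpa using hn) hQ₁ hQ₂
  have : Nonempty (Fin n) := ⟨⟨0, by omega⟩⟩
  ext p
  constructor
  · rintro ⟨x, hx, rfl⟩
    set B := replicateRow Unit x.ofLp
    have htr (Q : Matrix (Fin n) (Fin n) ℝ) : (Q * (Bᵀ * B)).trace = x.ofLp ⬝ᵥ Q *ᵥ x.ofLp := by
      rw [trace_mul_transpose_mul_self, Fintype.sum_unique]
      rfl
    have hpsd : (Bᵀ * B).PosSemidef := by
      simpa [conjTranspose_eq_transpose_of_trivial] using posSemidef_conjTranspose_mul_self B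
    refine ⟨Bᵀ * B, isHermitian_iff_isSymm.1 hpsd.isHermitian, hpsd, ?_, by rw [htr, htr]⟩
    rw [← one_mul (Bᵀ * B), htr, one_mulVec]
    exact (EuclideanSpace.norm_eq_one_iff_dotProduct x).1 hx
  · rintro ⟨X, -, hX, htr, rfl⟩
    obtain ⟨B, rfl⟩ := hX.exists_eq_transpose_mul_self
    obtain ⟨z, hz, hzp⟩ := trace_mul_mem_jointNumericalRange hS B htr
    exact ⟨WithLp.toLp 2 z, (EuclideanSpace.norm_eq_one_iff_dotProduct _).2 hz, hzp.symm⟩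
end
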